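/- arXiv:math/9710202 — 5 statements merged into one kernel-verified Lean document; each statement's English description precedes it below -/
import Mathlib

section
/- If k < h, or if k = h and j ≠ i, then χ_k^{(j)} ∘ φ_h^{(i)} = χ_k^{(j)} on [0,1). -/
open MeasureTheory Set

/-- The Haar function `χ_k^{(j)}` on `[0,1)`. -/
noncomputable def haar (k j : ℕ) (t : ℝ) : ℝ :=
  if ((2*j:ℝ)-2)/2^k ≤ t ∧ t < ((2*j:ℝ)-1)/2^k then (2:ℝ) ^ (((k:ℝ)-1)/2)
  else if ((2*j:ℝ)-1)/2^k ≤ t ∧ t < (2*j:ℝ)/2^k then -((2:ℝ) ^ (((k:ℝ)-1)/2))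
  else 0

/-- The transformation `φ_h^{(i)}` interchanging `Δ_{h+1}^{(4i-2)}` and `Δ_{h+1}^{(4i-1)}`. -/
noncomputable def phi (h i : ℕ) (t : ℝ) : ℝ :=
  if ((4*i:ℝ)-3)/2^(h+1) ≤ t ∧ t < ((4*i:ℝ)-2)/2^(h+1) then t + 1/2^(h+1)
  else if ((4*i:ℝ)-2)/2^(h+1) ≤ t ∧ t < ((4*i:ℝ)-1)/2^(h+1) then t - 1/2^(h+1)
  else t

/-!
`χ_k^{(j)}(t)` depends only on `⌊2^k t⌋`, and `φ_h^{(i)}` only moves points within the dyadic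
interval `⌊2^h t⌋ / 2 = i - 1` of rank `h - 1`, which it preserves. For `k < h` the integer
`⌊2^k t⌋` is determined by `⌊2^h t⌋ / 2`; for `k = h` the support of `χ_h^{(j)}` is the dyadic
interval `⌊2^h t⌋ / 2 = j - 1`, disjoint from the moved one when `j ≠ i`.
-/

lemma floor_two_pow_mul_eq_iff {n : ℕ} {m : ℤ} {t : ℝ} :
    ⌊2 ^ n * t⌋ = m ↔ m / 2 ^ n ≤ t ∧ t < (m + 1) / 2 ^ n := by
  rw [Int.floor_eq_iff, div_le_iff₀' (by positivity), lt_div_iff₀' (by positivity)]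

lemma floor_two_pow_mul_eq_div {k n : ℕ} (hkn : k ≤ n) (t : ℝ) :
    ⌊2 ^ k * t⌋ = ⌊2 ^ n * t⌋ / 2 ^ (n - k) := by
  have h : (2 : ℝ) ^ k * t = 2 ^ n * t / ((2 ^ (n - k) : ℕ) : ℝ) := by
    rw [eq_div_iff (by positivity), Nat.cast_pow, Nat.cast_ofNat, mul_right_comm, ← pow_add,
      Nat.add_sub_cancel' hkn]
  rw [h, Int.floor_div_natCast]
  norm_cast

lemma floor_two_pow_mul_eq_of_floor_div_two_eq {k n : ℕ} (hkn : k < n) {s t : ℝ}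
    (h : ⌊2 ^ n * s⌋ / 2 = ⌊2 ^ n * t⌋ / 2) : ⌊2 ^ k * s⌋ = ⌊2 ^ k * t⌋ := by
  have hk : k ≤ n - 1 := by omega
  have hn : n - (n - 1) = 1 := by omega
  rw [floor_two_pow_mul_eq_div hk, floor_two_pow_mul_eq_div hk,
    floor_two_pow_mul_eq_div (n.sub_le 1), floor_two_pow_mul_eq_div (n.sub_le 1), hn, pow_one, h]

lemma haar_eq_ite_floor (k j : ℕ) (t : ℝ) :
    haar k j t = if ⌊2 ^ k * t⌋ = 2 * j - 2 then (2:ℝ) ^ (((k:ℝ)-1)/2)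
      else if ⌊2 ^ k * t⌋ = 2 * j - 1 then -((2:ℝ) ^ (((k:ℝ)-1)/2)) else 0 := by
  simp only [haar, floor_two_pow_mul_eq_iff]
  push_cast
  ring_nf

lemma haar_eq_of_floor_eq {k j : ℕ} {s t : ℝ} (h : ⌊2 ^ k * s⌋ = ⌊2 ^ k * t⌋) :
    haar k j s = haar k j t := by
  rw [haar_eq_ite_floor, haar_eq_ite_floor, h]

lemma haar_eq_zero_of_floor_div_two_ne {k j : ℕ} {t : ℝ} (h : ⌊2 ^ k * t⌋ / 2 ≠ j - 1) :
    haar k j t = 0 := by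
  rw [haar_eq_ite_floor, if_neg (by omega), if_neg (by omega)]

lemma floor_div_two_eq_iff {n : ℕ} {m : ℤ} {t : ℝ} :
    ⌊2 ^ n * t⌋ / 2 = m ↔ 4 * m ≤ 2 ^ (n + 1) * t ∧ 2 ^ (n + 1) * t < 4 * m + 4 := by
  have hfloor : ⌊2 ^ n * t⌋ / 2 = m ↔ 2 * m ≤ ⌊2 ^ n * t⌋ ∧ ⌊2 ^ n * t⌋ < 2 * m + 2 := by omega
  rw [hfloor, Int.le_floor, Int.floor_lt, pow_succ]
  push_cast
  constructor <;> rintro ⟨h₁, h₂⟩ <;> constructor <;> linarith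

lemma phi_eq_self_or_floor_div_two_eq (h i : ℕ) (t : ℝ) :
    phi h i t = t ∨ (⌊2 ^ h * t⌋ / 2 = i - 1 ∧ ⌊2 ^ h * phi h i t⌋ / 2 = i - 1) := by
  have hstep : (2 : ℝ) ^ (h + 1) * (1 / 2 ^ (h + 1)) = 1 := mul_one_div_cancel (by positivity)
  unfold phi
  split_ifs with hleft hright
  · right
    rw [div_le_iff₀' (by positivity), lt_div_iff₀' (by positivity)] at hleft
    rw [floor_div_two_eq_iff, floor_div_two_eq_iff, mul_add, hstep]
    push_cast
    constructor <;> constructor <;> linarith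
  · right
    rw [div_le_iff₀' (by positivity), lt_div_iff₀' (by positivity)] at hright
    rw [floor_div_two_eq_iff, floor_div_two_eq_iff, mul_sub, hstep]
    push_cast
    constructor <;> constructor <;> linarith
  · exact .inl rfl

theorem haar_comp_phi_low_general (k j h i : ℕ)
    (hcond : k < h ∨ (k = h ∧ j ≠ i)) :
    ∀ t ∈ Ico (0:ℝ) 1, haar k j (phi h i t) = haar k j t := by
  intro t _
  rcases phi_eq_self_or_floor_div_two_eq h i t with hfix | ⟨ht, hphi⟩
  · rw [hfix]
  rcases hcond with hkh | ⟨rfl, hji⟩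
  · exact haar_eq_of_floor_eq (floor_two_pow_mul_eq_of_floor_div_two_eq hkh (hphi.trans ht.symm))
  · have hij : (i : ℤ) - 1 ≠ j - 1 := by omega
    rw [haar_eq_zero_of_floor_div_two_ne (hphi.trans_ne hij),
      haar_eq_zero_of_floor_div_two_ne (ht.trans_ne hij)]

/-- If `k < h`, or `k = h` and `j ≠ i`, then `χ_k^{(j)} ∘ φ_h^{(i)} = χ_k^{(j)}`. -/
theorem haar_comp_phi_low (k j h i : ℕ) (hk : 1 ≤ k) (hj : 1 ≤ j) (hj2 : j ≤ 2^(k-1))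
    (hh : 1 ≤ h) (hi : 1 ≤ i) (hi2 : i ≤ 2^(h-1))
    (hcond : k < h ∨ (k = h ∧ j ≠ i)) :
    ∀ t ∈ Ico (0:ℝ) 1, haar k j (phi h i t) = haar k j t :=
  haar_comp_phi_low_general k j h i hcond
end

section
/- Let f ∈ L_2^X be an X-valued square-integrable function on [0,1) whose Haar-Fourier coefficients ⟨f, χ_{h+1}^{(2i-1)}⟩ and ⟨f, χ_{h+1}^{(2i)}⟩ both vanish. Then ⟨f ∘ φ_h^{(i)}, χ_h^{(i)}⟩ = 0 and ⟨f ∘ φ_h^{(i)}, χ_{h+1}^{(2i-1)}⟩ = ⟨f ∘ φ_h^{(i)}, χ_{h+1}^{(2i)}⟩ = ⟨f, χ_h^{(i)}⟩/√2. -/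
open MeasureTheory Set

/-- The Haar–Fourier coefficient `⟨f, χ_k^{(j)}⟩`. -/
noncomputable def haarCoeff {X : Type*} [NormedAddCommGroup X] [NormedSpace ℝ X]
    (f : ℝ → X) (k j : ℕ) : X :=
  ∫ t in Ico (0:ℝ) 1, haar k j t • f t

/-!
On the dyadic interval `Δ_h^{(i)}`, cut into its four quarters `Δ_{h+1}^{(4i-3)}, …, Δ_{h+1}^{(4i)}`
with integrals `a₀, a₁, a₂, a₃`, the three coefficients involved are
`⟨f, χ_h^{(i)}⟩ = 2^{(h-1)/2} (a₀ + a₁ - a₂ - a₃)`, `⟨f, χ_{h+1}^{(2i-1)}⟩ = 2^{h/2} (a₀ - a₁)` and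
`⟨f, χ_{h+1}^{(2i)}⟩ = 2^{h/2} (a₂ - a₃)`. Since Lebesgue measure is translation invariant,
composing with `φ_h^{(i)}` swaps `a₁` and `a₂`. The hypotheses say `a₀ = a₁` and `a₂ = a₃`, and the
three claims become identities in `a₀` and `a₂`.
-/

/-- `dyadicIco k n` is the paper's `Δ_k^{(n+1)}`. -/
def dyadicIco (k n : ℕ) : Set ℝ := Ico (n / 2 ^ k) ((n + 1) / 2 ^ k)

noncomputable def haarHeight (k : ℕ) : ℝ := 2 ^ (((k : ℝ) - 1) / 2)

lemma haarHeight_pos (k : ℕ) : 0 < haarHeight k := Real.rpow_pos_of_pos two_pos _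

lemma haarHeight_succ (k : ℕ) : haarHeight (k + 1) = Real.sqrt 2 * haarHeight k := by
  rw [haarHeight, haarHeight, Real.sqrt_eq_rpow, ← Real.rpow_add two_pos]
  push_cast
  ring_nf

lemma haar_succ (k n : ℕ) :
    haar k (n + 1) = (dyadicIco k (2 * n)).indicator (fun _ => haarHeight k)
      - (dyadicIco k (2 * n + 1)).indicator (fun _ => haarHeight k) := by
  ext t
  have e₀ : 2 * ((n : ℝ) + 1) - 2 = 2 * n := by ring
  have e₁ : 2 * ((n : ℝ) + 1) - 1 = 2 * n + 1 := by ring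
  have e₂ : 2 * ((n : ℝ) + 1) = 2 * n + 1 + 1 := by ring
  simp only [haar, dyadicIco, haarHeight, Pi.sub_apply, indicator_apply, mem_Ico]
  push_cast
  rw [e₀, e₁, e₂]
  split_ifs with h₁ h₂ <;> simp
  exact absurd h₂.1 (not_le.2 h₁.2)

lemma measurableSet_dyadicIco {k n : ℕ} : MeasurableSet (dyadicIco k n) :=
  measurableSet_Ico

lemma dyadicIco_subset_Ico_zero_one {k n : ℕ} (hn : n + 1 ≤ 2 ^ k) :
    dyadicIco k n ⊆ Ico 0 1 := by
  apply Ico_subset_Ico (by positivity)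
  rw [div_le_one (by positivity)]
  exact_mod_cast hn

lemma dyadicIco_union_succ (k n : ℕ) :
    dyadicIco (k + 1) (2 * n) ∪ dyadicIco (k + 1) (2 * n + 1) = dyadicIco k n := by
  simp only [dyadicIco, pow_succ]
  push_cast
  rw [Ico_union_Ico_eq_Ico (by gcongr; linarith) (by gcongr; linarith)]
  congr 1
  · field_simp
  · field_simp
    ring

lemma disjoint_dyadicIco_succ (k n : ℕ) : Disjoint (dyadicIco k n) (dyadicIco k (n + 1)) := by
  simp only [dyadicIco, Nat.cast_succ]
  exact Ico_disjoint_Ico_same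

lemma disjoint_dyadicIco_of_lt {k m m' : ℕ} (hm : m < m') :
    Disjoint (dyadicIco k m) (dyadicIco k m') := by
  refine disjoint_left.2 fun t ht ht' => ?_
  have : ((m : ℝ) + 1) / 2 ^ k ≤ m' / 2 ^ k := by gcongr; exact_mod_cast hm
  linarith [ht.2, ht'.1]

lemma preimage_add_dyadicIco_succ (k n : ℕ) :
    (fun t => t + 1 / 2 ^ k) ⁻¹' dyadicIco k (n + 1) = dyadicIco k n := by
  simp only [dyadicIco, preimage_add_const_Ico, Nat.cast_succ]
  congr 1 <;> ring

lemma preimage_sub_dyadicIco (k n : ℕ) :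
    (fun t => t - 1 / 2 ^ k) ⁻¹' dyadicIco k n = dyadicIco k (n + 1) := by
  simp only [dyadicIco, preimage_sub_const_Ico, Nat.cast_succ]
  congr 1 <;> ring

open Classical in
lemma phi_succ (h n : ℕ) (t : ℝ) :
    phi h (n + 1) t =
      if t ∈ dyadicIco (h + 1) (4 * n + 1) then t + 1 / 2 ^ (h + 1)
      else if t ∈ dyadicIco (h + 1) (4 * n + 2) then t - 1 / 2 ^ (h + 1)
      else t := by
  have e₃ : 4 * ((n : ℝ) + 1) - 3 = 4 * n + 1 := by ring
  have e₂ : 4 * ((n : ℝ) + 1) - 2 = 4 * n + 2 := by ring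
  have e₁ : 4 * ((n : ℝ) + 1) - 1 = 4 * n + 2 + 1 := by ring
  have e₂' : 4 * (n : ℝ) + 1 + 1 = 4 * n + 2 := by ring
  simp only [phi, dyadicIco, mem_Ico]
  push_cast
  rw [e₃, e₂, e₁, e₂']

lemma phi_of_mem_dyadicIco_four_mul {h n : ℕ} {t : ℝ} (ht : t ∈ dyadicIco (h + 1) (4 * n)) :
    phi h (n + 1) t = t := by
  rw [phi_succ, if_neg (disjoint_left.1 (disjoint_dyadicIco_of_lt (by omega)) ht),
    if_neg (disjoint_left.1 (disjoint_dyadicIco_of_lt (by omega)) ht)]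

lemma phi_of_mem_dyadicIco_four_mul_add_one {h n : ℕ} {t : ℝ}
    (ht : t ∈ dyadicIco (h + 1) (4 * n + 1)) : phi h (n + 1) t = t + 1 / 2 ^ (h + 1) := by
  rw [phi_succ, if_pos ht]

lemma phi_of_mem_dyadicIco_four_mul_add_two {h n : ℕ} {t : ℝ}
    (ht : t ∈ dyadicIco (h + 1) (4 * n + 2)) : phi h (n + 1) t = t - 1 / 2 ^ (h + 1) := by
  rw [phi_succ, if_neg (disjoint_right.1 (disjoint_dyadicIco_of_lt (by omega)) ht), if_pos ht]

lemma phi_of_mem_dyadicIco_four_mul_add_three {h n : ℕ} {t : ℝ}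
    (ht : t ∈ dyadicIco (h + 1) (4 * n + 3)) : phi h (n + 1) t = t := by
  rw [phi_succ, if_neg (disjoint_right.1 (disjoint_dyadicIco_of_lt (by omega)) ht),
    if_neg (disjoint_right.1 (disjoint_dyadicIco_of_lt (by omega)) ht)]

section Integrals

variable {X : Type*} [NormedAddCommGroup X]

lemma MeasureTheory.IntegrableOn.comp_add_dyadicIco {f : ℝ → X} {k n : ℕ}
    (hf : IntegrableOn f (dyadicIco k (n + 1))) :
    IntegrableOn (fun t => f (t + 1 / 2 ^ k)) (dyadicIco k n) := by
  have := ((measurePreserving_add_right volume (1 / 2 ^ k)).integrableOn_comp_preimage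
    (measurableEmbedding_addRight _)).2 hf
  rwa [preimage_add_dyadicIco_succ] at this

lemma MeasureTheory.IntegrableOn.comp_sub_dyadicIco {f : ℝ → X} {k n : ℕ}
    (hf : IntegrableOn f (dyadicIco k n)) :
    IntegrableOn (fun t => f (t - 1 / 2 ^ k)) (dyadicIco k (n + 1)) := by
  have := ((measurePreserving_sub_right volume (1 / 2 ^ k)).integrableOn_comp_preimage
    (measurableEmbedding_subRight _)).2 hf
  rwa [preimage_sub_dyadicIco] at this

lemma MeasureTheory.IntegrableOn.comp_phi {f : ℝ → X} {h n : ℕ} (hf : IntegrableOn f (Ico 0 1))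
    (hn : 4 * n + 4 ≤ 2 ^ (h + 1)) : IntegrableOn (f ∘ phi h (n + 1)) (Ico 0 1) := by
  set A := dyadicIco (h + 1) (4 * n + 1)
  set B := dyadicIco (h + 1) (4 * n + 2)
  have hfA : IntegrableOn f A := hf.mono_set (dyadicIco_subset_Ico_zero_one (by omega))
  have hfB : IntegrableOn f B := hf.mono_set (dyadicIco_subset_Ico_zero_one (by omega))
  have hA : IntegrableOn (f ∘ phi h (n + 1)) A :=
    hfB.comp_add_dyadicIco.congr_fun (fun t ht => by
      rw [Function.comp_apply, phi_of_mem_dyadicIco_four_mul_add_one ht]) measurableSet_dyadicIco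
  have hB : IntegrableOn (f ∘ phi h (n + 1)) B :=
    hfA.comp_sub_dyadicIco.congr_fun (fun t ht => by
      rw [Function.comp_apply, phi_of_mem_dyadicIco_four_mul_add_two ht]) measurableSet_dyadicIco
  have hrest : IntegrableOn (f ∘ phi h (n + 1)) (Ico 0 1 \ (A ∪ B)) :=
    (hf.mono_set sdiff_subset).congr_fun
      (fun t ht => by
        rw [Function.comp_apply, phi_succ, if_neg fun h => ht.2 (Or.inl h),
          if_neg fun h => ht.2 (Or.inr h)])
      (measurableSet_Ico.diff (measurableSet_dyadicIco.union measurableSet_dyadicIco))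
  exact (hrest.union (hA.union hB)).mono_set fun t ht => by
    by_cases hAB : t ∈ A ∪ B
    · exact Or.inr hAB
    · exact Or.inl ⟨ht, hAB⟩

variable [NormedSpace ℝ X]

lemma setIntegral_dyadicIco_comp_add (f : ℝ → X) (k n : ℕ) :
    ∫ t in dyadicIco k n, f (t + 1 / 2 ^ k) = ∫ t in dyadicIco k (n + 1), f t := by
  rw [← preimage_add_dyadicIco_succ]
  exact (measurePreserving_add_right volume _).setIntegral_preimage_emb
    (measurableEmbedding_addRight _) f _

lemma setIntegral_dyadicIco_comp_sub (f : ℝ → X) (k n : ℕ) :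
    ∫ t in dyadicIco k (n + 1), f (t - 1 / 2 ^ k) = ∫ t in dyadicIco k n, f t := by
  rw [← preimage_sub_dyadicIco]
  exact (measurePreserving_sub_right volume _).setIntegral_preimage_emb
    (measurableEmbedding_subRight _) f _

lemma setIntegral_dyadicIco_eq_add {f : ℝ → X} {k n : ℕ} (hf : IntegrableOn f (dyadicIco k n)) :
    ∫ t in dyadicIco k n, f t =
      (∫ t in dyadicIco (k + 1) (2 * n), f t) + ∫ t in dyadicIco (k + 1) (2 * n + 1), f t := by
  rw [← dyadicIco_union_succ] at hf ⊢
  exact setIntegral_union (disjoint_dyadicIco_succ _ _) measurableSet_dyadicIco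
    hf.left_of_union hf.right_of_union

lemma haarCoeff_succ {f : ℝ → X} {k n : ℕ} (hn : 2 * n + 2 ≤ 2 ^ k)
    (h₀ : IntegrableOn f (dyadicIco k (2 * n))) (h₁ : IntegrableOn f (dyadicIco k (2 * n + 1))) :
    haarCoeff f k (n + 1) = haarHeight k •
      ((∫ t in dyadicIco k (2 * n), f t) - ∫ t in dyadicIco k (2 * n + 1), f t) := by
  have integrable : ∀ m, IntegrableOn f (dyadicIco k m) →
      Integrable ((dyadicIco k m).indicator fun s => haarHeight k • f s)
        (volume.restrict (Ico 0 1)) :=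
    fun m hf => (IntegrableOn.integrable_indicator (hf.smul _) measurableSet_dyadicIco).restrict
  have setIntegral_indicator_eq : ∀ m, m + 1 ≤ 2 ^ k →
      ∫ t in Ico 0 1, (dyadicIco k m).indicator (fun s => haarHeight k • f s) t =
        haarHeight k • ∫ t in dyadicIco k m, f t := fun m hm => by
    rw [setIntegral_indicator measurableSet_dyadicIco,
      inter_eq_right.2 (dyadicIco_subset_Ico_zero_one hm), integral_smul]
  simp only [haarCoeff, haar_succ, Pi.sub_apply, sub_smul, ← indicator_smul_apply_left]
  rw [integral_sub (integrable _ h₀) (integrable _ h₁), setIntegral_indicator_eq _ (by omega),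
    setIntegral_indicator_eq _ (by omega), smul_sub]

lemma haarCoeff_eq_quarters {g : ℝ → X} {k n : ℕ} (hg : IntegrableOn g (Ico 0 1))
    (hn : 4 * n + 4 ≤ 2 ^ (k + 1)) :
    haarCoeff g k (n + 1) = haarHeight k •
      ((∫ t in dyadicIco (k + 1) (4 * n), g t) + (∫ t in dyadicIco (k + 1) (4 * n + 1), g t) -
        ((∫ t in dyadicIco (k + 1) (4 * n + 2), g t) +
          ∫ t in dyadicIco (k + 1) (4 * n + 3), g t)) ∧
    haarCoeff g (k + 1) (2 * n + 1) = haarHeight (k + 1) •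
      ((∫ t in dyadicIco (k + 1) (4 * n), g t) - ∫ t in dyadicIco (k + 1) (4 * n + 1), g t) ∧
    haarCoeff g (k + 1) (2 * n + 2) = haarHeight (k + 1) •
      ((∫ t in dyadicIco (k + 1) (4 * n + 2), g t) -
        ∫ t in dyadicIco (k + 1) (4 * n + 3), g t) := by
  have hk : 2 * n + 2 ≤ 2 ^ k := by rw [pow_succ] at hn; omega
  have hD : ∀ {k m : ℕ}, m + 1 ≤ 2 ^ k → IntegrableOn g (dyadicIco k m) :=
    fun hm => hg.mono_set (dyadicIco_subset_Ico_zero_one hm)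
  have e₀ : 2 * (2 * n) = 4 * n := by ring
  have e₁ : 2 * (2 * n + 1) = 4 * n + 2 := by ring
  refine ⟨?_, ?_, ?_⟩
  · rw [haarCoeff_succ hk (hD (by omega)) (hD (by omega)),
      setIntegral_dyadicIco_eq_add (n := 2 * n) (hD (by omega)),
      setIntegral_dyadicIco_eq_add (n := 2 * n + 1) (hD (by omega)), e₀, e₁]
  · rw [haarCoeff_succ (by omega) (hD (by omega)) (hD (by omega)), e₀]
  · rw [show 2 * n + 2 = 2 * n + 1 + 1 from rfl,
      haarCoeff_succ (by omega) (hD (by omega)) (hD (by omega)), e₁]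

lemma setIntegral_dyadicIco_comp_phi (f : ℝ → X) (h n : ℕ) :
    (∫ t in dyadicIco (h + 1) (4 * n), (f ∘ phi h (n + 1)) t =
      ∫ t in dyadicIco (h + 1) (4 * n), f t) ∧
    (∫ t in dyadicIco (h + 1) (4 * n + 1), (f ∘ phi h (n + 1)) t =
      ∫ t in dyadicIco (h + 1) (4 * n + 2), f t) ∧
    (∫ t in dyadicIco (h + 1) (4 * n + 2), (f ∘ phi h (n + 1)) t =
      ∫ t in dyadicIco (h + 1) (4 * n + 1), f t) ∧
    (∫ t in dyadicIco (h + 1) (4 * n + 3), (f ∘ phi h (n + 1)) t =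
      ∫ t in dyadicIco (h + 1) (4 * n + 3), f t) := by
  refine ⟨setIntegral_congr_fun measurableSet_dyadicIco fun t ht => ?_, ?_, ?_,
    setIntegral_congr_fun measurableSet_dyadicIco fun t ht => ?_⟩
  · rw [Function.comp_apply, phi_of_mem_dyadicIco_four_mul ht]
  · rw [← setIntegral_dyadicIco_comp_add f]
    exact setIntegral_congr_fun measurableSet_dyadicIco fun t ht => by
      rw [Function.comp_apply, phi_of_mem_dyadicIco_four_mul_add_one ht]
  · rw [← setIntegral_dyadicIco_comp_sub f]
    exact setIntegral_congr_fun measurableSet_dyadicIco fun t ht => by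
      rw [Function.comp_apply, phi_of_mem_dyadicIco_four_mul_add_two ht]
  · rw [Function.comp_apply, phi_of_mem_dyadicIco_four_mul_add_three ht]

end Integrals

theorem haarCoeff_comp_phi_general {X : Type*} [NormedAddCommGroup X] [NormedSpace ℝ X]
    (f : ℝ → X)
    (hf : MemLp f 2 (volume.restrict (Ico (0:ℝ) 1)))
    (h i : ℕ) (hh : 1 ≤ h) (hi : 1 ≤ i) (hi2 : i ≤ 2^(h-1))
    (h1 : haarCoeff f (h+1) (2*i-1) = 0) (h2 : haarCoeff f (h+1) (2*i) = 0) :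
    haarCoeff (f ∘ phi h i) h i = 0 ∧
    haarCoeff (f ∘ phi h i) (h+1) (2*i-1) = (Real.sqrt 2)⁻¹ • haarCoeff f h i ∧
    haarCoeff (f ∘ phi h i) (h+1) (2*i) = (Real.sqrt 2)⁻¹ • haarCoeff f h i := by
  obtain ⟨n, rfl⟩ : ∃ n, i = n + 1 := ⟨i - 1, by omega⟩
  have hn : 4 * n + 4 ≤ 2 ^ (h + 1) :=
    calc 4 * n + 4 = 4 * (n + 1) := by ring
      _ ≤ 4 * 2 ^ (h - 1) := by gcongr
      _ = 2 ^ (h + 1) := by rw [show h + 1 = h - 1 + 2 by omega, pow_add]; ring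
  have hfI : IntegrableOn f (Ico 0 1) := hf.integrable one_le_two
  obtain ⟨F, F₁, F₂⟩ := haarCoeff_eq_quarters hfI hn
  obtain ⟨G, G₁, G₂⟩ := haarCoeff_eq_quarters (hfI.comp_phi hn) hn
  obtain ⟨e₀, e₁, e₂, e₃⟩ := setIntegral_dyadicIco_comp_phi f h n
  rw [show 2 * (n + 1) - 1 = 2 * n + 1 by omega] at h1 ⊢
  rw [show 2 * (n + 1) = 2 * n + 2 by ring] at h2 ⊢
  rw [F₁, smul_eq_zero_iff_right (haarHeight_pos _).ne', sub_eq_zero] at h1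
  rw [F₂, smul_eq_zero_iff_right (haarHeight_pos _).ne', sub_eq_zero] at h2
  rw [G, G₁, G₂, e₀, e₁, e₂, e₃, F, ← h1, ← h2, sub_self, smul_zero]
  refine ⟨rfl, ?_, ?_⟩ <;>
  · rw [haarHeight_succ]
    conv_lhs => rw [← Real.div_sqrt]
    module

/-- Shifting of Haar–Fourier coefficients under `φ_h^{(i)}`. -/
theorem haarCoeff_comp_phi {X : Type*} [NormedAddCommGroup X] [NormedSpace ℝ X]
    [CompleteSpace X] (f : ℝ → X)
    (hf : MemLp f 2 (volume.restrict (Ico (0:ℝ) 1)))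
    (h i : ℕ) (hh : 1 ≤ h) (hi : 1 ≤ i) (hi2 : i ≤ 2^(h-1))
    (h1 : haarCoeff f (h+1) (2*i-1) = 0) (h2 : haarCoeff f (h+1) (2*i) = 0) :
    haarCoeff (f ∘ phi h i) h i = 0 ∧
    haarCoeff (f ∘ phi h i) (h+1) (2*i-1) = (Real.sqrt 2)⁻¹ • haarCoeff f h i ∧
    haarCoeff (f ∘ phi h i) (h+1) (2*i) = (Real.sqrt 2)⁻¹ • haarCoeff f h i :=
  haarCoeff_comp_phi_general f hf h i hh hi hi2 h1 h2
end

section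
/- Proposition 1: For every operator T: X → Y and every n ≥ 1, μ_n(T) ≤ μ_{2n}°°(T). That is, the least constant for arbitrary sign changes of the first n Haar levels is bounded by the least constant for the fixed alternating signs (−1)^k over 2n levels. -/
open MeasureTheory Set

/-- The `L_2` norm on `[0,1)` of an `X`-valued function. -/
noncomputable def l2norm {X : Type*} [NormedAddCommGroup X] (g : ℝ → X) : ℝ :=
  Real.sqrt (∫ t in Ico (0:ℝ) 1, ‖g t‖^2)

/-- `Σ_{(k,j), m ≤ k ≤ n} ε_k^{(j)} x_k^{(j)} χ_k^{(j)}(t)`. -/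
noncomputable def walshSum {X : Type*} [NormedAddCommGroup X] [NormedSpace ℝ X]
    (x : ℕ → ℕ → X) (ε : ℕ → ℕ → ℝ) (m n : ℕ) (t : ℝ) : X :=
  ∑ k ∈ Finset.Icc m n, ∑ j ∈ Finset.Icc 1 (2^(k-1)), (ε k j * haar k j t) • x k j

/-- `μ_n(T)`: least `c ≥ 1` for arbitrary sign changes. -/
noncomputable def mu {X Y : Type*} [NormedAddCommGroup X] [NormedSpace ℝ X]
    [NormedAddCommGroup Y] [NormedSpace ℝ Y] (T : X →L[ℝ] Y) (n : ℕ) : ℝ :=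
  sInf {c : ℝ | 1 ≤ c ∧ ∀ (x : ℕ → ℕ → X) (ε : ℕ → ℕ → ℝ),
    (∀ k j, ε k j = 1 ∨ ε k j = -1) →
    l2norm (walshSum (fun k j => T (x k j)) ε 1 n) ≤
      c * l2norm (walshSum x (fun _ _ => 1) 1 n)}

/-- `μ_n°(T)`: least `c ≥ 1` for level-constant sign changes. -/
noncomputable def muCirc {X Y : Type*} [NormedAddCommGroup X] [NormedSpace ℝ X]
    [NormedAddCommGroup Y] [NormedSpace ℝ Y] (T : X →L[ℝ] Y) (n : ℕ) : ℝ :=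
  sInf {c : ℝ | 1 ≤ c ∧ ∀ (x : ℕ → ℕ → X) (ε : ℕ → ℝ),
    (∀ k, ε k = 1 ∨ ε k = -1) →
    l2norm (walshSum (fun k j => T (x k j)) (fun k _ => ε k) 1 n) ≤
      c * l2norm (walshSum x (fun _ _ => 1) 1 n)}

/-- `μ_n°°(T)`: least `c ≥ 1` for the fixed signs `(-1)^k`. -/
noncomputable def muCC {X Y : Type*} [NormedAddCommGroup X] [NormedSpace ℝ X]
    [NormedAddCommGroup Y] [NormedSpace ℝ Y] (T : X →L[ℝ] Y) (n : ℕ) : ℝ :=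
  sInf {c : ℝ | 1 ≤ c ∧ ∀ (x : ℕ → ℕ → X),
    l2norm (walshSum (fun k j => T (x k j)) (fun k _ => (-1)^k) 1 n) ≤
      c * l2norm (walshSum x (fun _ _ => 1) 1 n)}

/-!
Both constants are computed on step functions: a Walsh sum over the levels `1, …, N` is constant
on the dyadic intervals of length `2⁻ᴺ`, so its `L_2` norm is the quadratic mean of `2ᴺ` values.

Given signs `ε`, move each coefficient `x_k^{(J)}` to level `2k-1` if `ε_k^{(J)} = -1`, and to
both children at level `2k` otherwise (rescaled to the Haar normalisation of the new level). The
alternating signs `(-1)^l` then reproduce `ε`. Reading a level-`2n` cell as `n` base-4 digits and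
keeping, at each step, the bit that belongs to the level actually used gives a map to the level-`n`
cells with fibres of size `2ⁿ` which carries the new sum onto the old one. Hence both sides of the
defining inequality of `μ_n` keep their norms, and every constant for `μ°°_{2n}` works for `μ_n`.

The constants for `μ°°_{2n}` form a nonempty set (otherwise `μ°°_{2n}` would be `sInf ∅ = 0`) by a
crude bound: a partial sum is the average of the two finer ones, so each summand is at most twice
the maximal value.
-/

lemma Finset.sum_range_mul_eq_sum_sum {M : Type*} [AddCommMonoid M] (f : ℕ → M) (m b : ℕ) :
    ∑ c ∈ Finset.range (m * b), f c =
      ∑ q ∈ Finset.range m, ∑ e ∈ Finset.range b, f (q * b + e) := by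
  induction m with
  | zero => simp
  | succ m ih => rw [Nat.succ_mul, Finset.sum_range_add, ih, Finset.sum_range_succ]

lemma Finset.sum_Icc_one_two_mul {M : Type*} [AddCommMonoid M] (f : ℕ → M) (n : ℕ) :
    ∑ l ∈ Finset.Icc 1 (2 * n), f l = ∑ k ∈ Finset.Icc 1 n, (f (2 * k - 1) + f (2 * k)) := by
  induction n with
  | zero => simp
  | succ n ih =>
    rw [show 2 * (n + 1) = 2 * n + 1 + 1 by ring, Finset.sum_Icc_succ_top (by omega),
      Finset.sum_Icc_succ_top (by omega), ih, Finset.sum_Icc_succ_top (by omega),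
      show 2 * (n + 1) - 1 = 2 * n + 1 by omega, show 2 * (n + 1) = 2 * n + 1 + 1 by ring,
      add_assoc]

namespace Haar

noncomputable def haarAmp (k : ℕ) : ℝ := (2 : ℝ) ^ (((k : ℝ) - 1) / 2)

lemma haarAmp_pos (k : ℕ) : 0 < haarAmp k := Real.rpow_pos_of_pos two_pos _

lemma l2norm_nonneg {X : Type*} [NormedAddCommGroup X] (g : ℝ → X) : 0 ≤ l2norm g :=
  Real.sqrt_nonneg _

def dyadicCell (k q : ℕ) : Set ℝ := Ico ((q : ℝ) / 2 ^ k) (((q : ℝ) + 1) / 2 ^ k)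

lemma natCast_div_two_pow_le_iff {k q a : ℕ} {t : ℝ} (ht : t ∈ dyadicCell k q) :
    (a : ℝ) / 2 ^ k ≤ t ↔ a ≤ q := by
  constructor
  · intro h
    have : (a : ℝ) < q + 1 :=
      (div_lt_div_iff_of_pos_right (by positivity)).1 (h.trans_lt ht.2)
    exact_mod_cast Nat.lt_succ_iff.1 (by exact_mod_cast this)
  · intro h
    exact le_trans (by gcongr) ht.1

lemma lt_natCast_div_two_pow_iff {k q a : ℕ} {t : ℝ} (ht : t ∈ dyadicCell k q) :
    t < (a : ℝ) / 2 ^ k ↔ q < a := by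
  rw [← not_le, natCast_div_two_pow_le_iff ht, not_le]

lemma haar_eq_of_mem_dyadicCell {k j q : ℕ} {t : ℝ} (hj : 1 ≤ j) (ht : t ∈ dyadicCell k q) :
    haar k j t = if q / 2 + 1 = j then (-1) ^ (q % 2) * haarAmp k else 0 := by
  have h2 : (2 * j : ℝ) - 2 = ((2 * j - 2 : ℕ) : ℝ) := by
    push_cast [show 2 ≤ 2 * j by omega]; ring
  have h1 : (2 * j : ℝ) - 1 = ((2 * j - 1 : ℕ) : ℝ) := by
    push_cast [show 1 ≤ 2 * j by omega]; ring
  have h0 : (2 * j : ℝ) = ((2 * j : ℕ) : ℝ) := by push_cast; ring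
  rw [haar, h2, h1, h0]
  simp only [natCast_div_two_pow_le_iff ht, lt_natCast_div_two_pow_iff ht, haarAmp]
  rcases Nat.mod_two_eq_zero_or_one q with h | h <;> split_ifs <;> first | omega | simp [h]

lemma natCast_div_two_pow_eq {k N : ℕ} (hkN : k ≤ N) (a : ℕ) :
    (a : ℝ) / 2 ^ k = ((a * 2 ^ (N - k) : ℕ) : ℝ) / 2 ^ N := by
  rw [← Nat.sub_add_cancel hkN, pow_add, Nat.add_sub_cancel]
  push_cast
  rw [mul_comm ((2 : ℝ) ^ (N - k)), mul_div_mul_right _ _ (by positivity)]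

lemma dyadicCell_subset {k N : ℕ} (hkN : k ≤ N) (i : ℕ) :
    dyadicCell N i ⊆ dyadicCell k (i / 2 ^ (N - k)) := by
  intro t ⟨hit, hti⟩
  have hlo : i / 2 ^ (N - k) * 2 ^ (N - k) ≤ i := Nat.div_mul_le_self i _
  have hhi : i + 1 ≤ (i / 2 ^ (N - k) + 1) * 2 ^ (N - k) := by
    have := Nat.div_add_mod i (2 ^ (N - k))
    have := Nat.mod_lt i (Nat.two_pow_pos (N - k))
    nlinarith
  rw [dyadicCell, natCast_div_two_pow_eq hkN, ← Nat.cast_succ, natCast_div_two_pow_eq hkN]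
  exact ⟨le_trans (by gcongr) hit, hti.trans_le (by rw [← Nat.cast_succ]; gcongr)⟩

lemma setIntegral_Ico_zero_one_eq_sum {f : ℝ → ℝ} {c : ℕ → ℝ} (N : ℕ)
    (hf : ∀ i < 2 ^ N, EqOn f (fun _ => c i) (dyadicCell N i)) :
    ∫ t in Ico (0 : ℝ) 1, f t = (2 ^ N)⁻¹ * ∑ i ∈ Finset.range (2 ^ N), c i := by
  have hle (i : ℕ) : (i : ℝ) / 2 ^ N ≤ ((i + 1 : ℕ) : ℝ) / 2 ^ N := by gcongr; omega
  have hcell (i : ℕ) (hi : i < 2 ^ N) :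
      ∫ t in Ico ((i : ℝ) / 2 ^ N) (((i + 1 : ℕ) : ℝ) / 2 ^ N), f t = (2 ^ N)⁻¹ * c i := by
    rw [setIntegral_congr_fun measurableSet_Ico (by push_cast; exact hf i hi),
      setIntegral_const, measureReal_def, Real.volume_Ico,
      ENNReal.toReal_ofReal (by linarith [hle i]), smul_eq_mul]
    congr 1
    push_cast
    field_simp
    ring
  have hint (i : ℕ) (hi : i < 2 ^ N) :
      IntervalIntegrable f volume ((i : ℝ) / 2 ^ N) (((i + 1 : ℕ) : ℝ) / 2 ^ N) := by
    rw [intervalIntegrable_iff_integrableOn_Ico_of_le (hle i)]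
    exact (integrableOn_congr_fun (by push_cast; exact hf i hi) measurableSet_Ico).2
      (integrableOn_const measure_Ico_lt_top.ne)
  have hsum := intervalIntegral.sum_integral_adjacent_intervals hint
  simp only [Nat.cast_zero, zero_div, Nat.cast_pow, Nat.cast_ofNat,
    div_self (by positivity : (2 : ℝ) ^ N ≠ 0)] at hsum
  rw [integral_Ico_eq_integral_Ioc, ← intervalIntegral.integral_of_le zero_le_one, ← hsum,
    Finset.mul_sum]
  refine Finset.sum_congr rfl fun i hi => ?_
  rw [intervalIntegral.integral_of_le (hle i), ← integral_Ico_eq_integral_Ioc,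
    hcell i (Finset.mem_range.1 hi)]

section
variable {X Y : Type*} [NormedAddCommGroup X] [NormedSpace ℝ X]
  [NormedAddCommGroup Y] [NormedSpace ℝ Y]

/-- The level-`k` summand of a Walsh sum on the level-`k` dyadic cell `q`, where the only
nonzero Haar function of that level is `χ_k^{(q/2+1)}`, with sign `(-1)^q`. -/
noncomputable def levelTerm (z : ℕ → ℕ → X) (η : ℕ → ℕ → ℝ) (k q : ℕ) : X :=
  (η k (q / 2 + 1) * (-1) ^ (q % 2) * haarAmp k) • z k (q / 2 + 1)

noncomputable def cellValue (z : ℕ → ℕ → X) (η : ℕ → ℕ → ℝ) (N i : ℕ) : X :=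
  ∑ k ∈ Finset.Icc 1 N, levelTerm z η k (i / 2 ^ (N - k))

lemma walshSum_eq_cellValue {z : ℕ → ℕ → X} {η : ℕ → ℕ → ℝ} {N i : ℕ} (hi : i < 2 ^ N)
    {t : ℝ} (ht : t ∈ dyadicCell N i) : walshSum z η 1 N t = cellValue z η N i := by
  refine Finset.sum_congr rfl fun k hk => ?_
  obtain ⟨hk1, hkN⟩ := Finset.mem_Icc.1 hk
  have hcell := dyadicCell_subset hkN i ht
  have hq_lt : i / 2 ^ (N - k) < 2 ^ (k - 1) * 2 := by
    rw [← pow_succ, Nat.sub_add_cancel hk1, Nat.div_lt_iff_lt_mul (Nat.two_pow_pos _),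
      ← pow_add, Nat.add_sub_cancel' hkN]
    exact hi
  generalize i / 2 ^ (N - k) = q at hcell hq_lt ⊢
  have hq : q / 2 + 1 ∈ Finset.Icc 1 (2 ^ (k - 1)) := Finset.mem_Icc.2 ⟨by omega, by omega⟩
  rw [Finset.sum_eq_single_of_mem _ hq, levelTerm,
    haar_eq_of_mem_dyadicCell le_add_self hcell, if_pos rfl, mul_assoc]
  intro j hj hne
  rw [haar_eq_of_mem_dyadicCell (Finset.mem_Icc.1 hj).1 hcell, if_neg (Ne.symm hne), mul_zero,
    zero_smul]

lemma l2norm_walshSum (z : ℕ → ℕ → X) (η : ℕ → ℕ → ℝ) (N : ℕ) :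
    l2norm (walshSum z η 1 N) =
      √((2 ^ N)⁻¹ * ∑ i ∈ Finset.range (2 ^ N), ‖cellValue z η N i‖ ^ 2) := by
  rw [l2norm, setIntegral_Ico_zero_one_eq_sum (c := fun i => ‖cellValue z η N i‖ ^ 2) N
    fun i hi t ht => by simp only [walshSum_eq_cellValue hi ht]]

lemma cellValue_succ (z : ℕ → ℕ → X) (η : ℕ → ℕ → ℝ) (k q : ℕ) :
    cellValue z η (k + 1) q = cellValue z η k (q / 2) + levelTerm z η (k + 1) q := by
  rw [cellValue, Finset.sum_Icc_succ_top (by omega), Nat.sub_self, pow_zero, Nat.div_one]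
  congr 1
  refine Finset.sum_congr rfl fun m hm => ?_
  rw [Nat.div_div_eq_div_mul, ← pow_succ', Nat.sub_add_comm (Finset.mem_Icc.1 hm).2]

lemma levelTerm_two_mul_add_levelTerm (z : ℕ → ℕ → X) (η : ℕ → ℕ → ℝ) (k p : ℕ) :
    levelTerm z η k (2 * p) + levelTerm z η k (2 * p + 1) = 0 := by
  simp only [levelTerm, show 2 * p / 2 = p by omega, show (2 * p + 1) / 2 = p by omega,
    Nat.mul_mod_right, Nat.mul_add_mod, pow_zero]
  rw [← add_smul]
  simp

lemma cellValue_two_mul_add_cellValue (z : ℕ → ℕ → X) (η : ℕ → ℕ → ℝ) (k p : ℕ) :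
    cellValue z η (k + 1) (2 * p) + cellValue z η (k + 1) (2 * p + 1) =
      (2 : ℝ) • cellValue z η k p := by
  rw [cellValue_succ, cellValue_succ, show 2 * p / 2 = p by omega,
    show (2 * p + 1) / 2 = p by omega, add_add_add_comm, levelTerm_two_mul_add_levelTerm,
    add_zero, two_smul]

lemma norm_cellValue_le_of_le {z : ℕ → ℕ → X} {η : ℕ → ℕ → ℝ} {N : ℕ} {M : ℝ}
    (h : ∀ i < 2 ^ N, ‖cellValue z η N i‖ ≤ M) {k : ℕ} (hkN : k ≤ N) :
    ∀ q < 2 ^ k, ‖cellValue z η k q‖ ≤ M := by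
  induction hkN using Nat.decreasingInduction with
  | self => exact h
  | of_succ k _ ih =>
    intro p hp
    have h2 : ‖(2 : ℝ) • cellValue z η k p‖ ≤ M + M := by
      rw [← cellValue_two_mul_add_cellValue]
      exact (norm_add_le _ _).trans (add_le_add (ih _ (by omega)) (ih _ (by omega)))
    rw [norm_smul, Real.norm_two] at h2
    linarith

lemma norm_levelTerm_le {z : ℕ → ℕ → X} {η : ℕ → ℕ → ℝ} {N : ℕ} {M : ℝ}
    (h : ∀ i < 2 ^ N, ‖cellValue z η N i‖ ≤ M) {k : ℕ} (hk : 1 ≤ k) (hkN : k ≤ N) {q : ℕ}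
    (hq : q < 2 ^ k) : ‖levelTerm z η k q‖ ≤ 2 * M := by
  obtain ⟨k, rfl⟩ : ∃ m, k = m + 1 := ⟨k - 1, by omega⟩
  have hq2 : q / 2 < 2 ^ k := by rw [pow_succ] at hq; omega
  rw [eq_sub_of_add_eq' (cellValue_succ z η k q).symm, two_mul]
  exact (norm_sub_le _ _).trans (add_le_add (norm_cellValue_le_of_le h hkN q hq)
    (norm_cellValue_le_of_le h (by omega) _ hq2))

lemma levelTerm_map (T : X →L[ℝ] Y) (z : ℕ → ℕ → X) (η : ℕ → ℕ → ℝ) (k q : ℕ) :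
    levelTerm (fun k j => T (z k j)) η k q =
      η k (q / 2 + 1) • T (levelTerm z (fun _ _ => 1) k q) := by
  rw [levelTerm, levelTerm, map_smul, smul_smul, one_mul, mul_assoc]

lemma norm_cellValue_map_le (T : X →L[ℝ] Y) {z : ℕ → ℕ → X} {η : ℕ → ℕ → ℝ}
    (hη : ∀ k j, |η k j| ≤ 1) {N : ℕ} {M : ℝ}
    (h : ∀ i < 2 ^ N, ‖cellValue z (fun _ _ => 1) N i‖ ≤ M) {i : ℕ} (hi : i < 2 ^ N) :
    ‖cellValue (fun k j => T (z k j)) η N i‖ ≤ N * (‖T‖ * (2 * M)) := by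
  have hterm : ∀ k ∈ Finset.Icc 1 N,
      ‖levelTerm (fun k j => T (z k j)) η k (i / 2 ^ (N - k))‖ ≤ ‖T‖ * (2 * M) := by
    intro k hk
    obtain ⟨hk1, hkN⟩ := Finset.mem_Icc.1 hk
    have hq : i / 2 ^ (N - k) < 2 ^ k := by
      rw [Nat.div_lt_iff_lt_mul (Nat.two_pow_pos _), ← pow_add, Nat.add_sub_cancel' hkN]
      exact hi
    rw [levelTerm_map, norm_smul, Real.norm_eq_abs]
    calc |η k _| * ‖T (levelTerm z (fun _ _ => 1) k _)‖
        ≤ 1 * (‖T‖ * ‖levelTerm z (fun _ _ => 1) k (i / 2 ^ (N - k))‖) :=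
          mul_le_mul (hη _ _) (T.le_opNorm _) (norm_nonneg _) zero_le_one
      _ ≤ ‖T‖ * (2 * M) := by
          rw [one_mul]
          exact mul_le_mul_of_nonneg_left (norm_levelTerm_le h hk1 hkN hq) (norm_nonneg T)
  calc ‖cellValue (fun k j => T (z k j)) η N i‖
      ≤ ∑ k ∈ Finset.Icc 1 N, ‖levelTerm (fun k j => T (z k j)) η k (i / 2 ^ (N - k))‖ :=
        norm_sum_le _ _
    _ ≤ (Finset.Icc 1 N).card • (‖T‖ * (2 * M)) := Finset.sum_le_card_nsmul _ _ _ hterm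
    _ = N * (‖T‖ * (2 * M)) := by rw [Nat.card_Icc, Nat.add_sub_cancel, nsmul_eq_mul]

lemma l2norm_walshSum_map_le (T : X →L[ℝ] Y) {η : ℕ → ℕ → ℝ} (hη : ∀ k j, |η k j| ≤ 1)
    (N : ℕ) (z : ℕ → ℕ → X) :
    l2norm (walshSum (fun k j => T (z k j)) η 1 N) ≤
      2 * N * ‖T‖ * √(2 ^ N) * l2norm (walshSum z (fun _ _ => 1) 1 N) := by
  set S := ∑ i ∈ Finset.range (2 ^ N), ‖cellValue z (fun _ _ => 1) N i‖ ^ 2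
  have hM : ∀ i < 2 ^ N, ‖cellValue z (fun _ _ => 1) N i‖ ≤ √S := fun i hi =>
    (Real.le_sqrt (norm_nonneg _) (by positivity)).2 <|
      Finset.single_le_sum (f := fun i => ‖cellValue z (fun _ _ => 1) N i‖ ^ 2)
        (fun _ _ => sq_nonneg _) (Finset.mem_range.2 hi)
  have hK : 0 ≤ N * (‖T‖ * (2 * √S)) := by positivity
  rw [l2norm_walshSum, l2norm_walshSum]
  calc √((2 ^ N)⁻¹ * ∑ i ∈ Finset.range (2 ^ N), ‖cellValue (fun k j => T (z k j)) η N i‖ ^ 2)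
      ≤ √((2 ^ N)⁻¹ * ∑ i ∈ Finset.range (2 ^ N), (N * (‖T‖ * (2 * √S))) ^ 2) := by
        gcongr with i hi
        exact norm_cellValue_map_le T hη hM (Finset.mem_range.1 hi)
    _ = N * (‖T‖ * (2 * √S)) := by
        rw [Finset.sum_const, Finset.card_range, nsmul_eq_mul, Nat.cast_pow, Nat.cast_ofNat,
          inv_mul_cancel_left₀ (by positivity), Real.sqrt_sq hK]
    _ = 2 * N * ‖T‖ * √(2 ^ N) * √((2 ^ N)⁻¹ * S) := by
        rw [mul_assoc _ (√(2 ^ N)), ← Real.sqrt_mul (by positivity),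
          mul_inv_cancel_left₀ (by positivity)]
        ring

end

noncomputable def splitLevel (ε : ℕ → ℕ → ℝ) (k J : ℕ) : ℕ :=
  if ε k J = -1 then 2 * k - 1 else 2 * k

/-- The bit of the base-4 digit `e` of a level-`2k` cell that is seen by the Haar function of
level `splitLevel ε k J`. -/
noncomputable def keptBit (ε : ℕ → ℕ → ℝ) (k J e : ℕ) : ℕ :=
  if ε k J = -1 then e / 2 % 2 else e % 2

/-- Maps a level-`2k` cell to a level-`k` cell; the Haar index followed at step `k + 1` is
`collapse ε k c + 1`. -/
noncomputable def collapse (ε : ℕ → ℕ → ℝ) : ℕ → ℕ → ℕ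
  | 0, _ => 0
  | k + 1, c =>
    2 * collapse ε k (c / 4) + keptBit ε (k + 1) (collapse ε k (c / 4) + 1) (c % 4)

lemma keptBit_le_one (ε : ℕ → ℕ → ℝ) (k J e : ℕ) : keptBit ε k J e ≤ 1 := by
  unfold keptBit; split_ifs <;> omega

lemma collapse_div_two_pow (ε : ℕ → ℕ → ℝ) {k n : ℕ} (hkn : k ≤ n) (c : ℕ) :
    collapse ε n c / 2 ^ (n - k) = collapse ε k (c / 4 ^ (n - k)) := by
  induction hkn generalizing c with
  | refl => simp
  | @step n hkn ih =>
    have := keptBit_le_one ε (n + 1) (collapse ε n (c / 4) + 1) (c % 4)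
    rw [collapse, Nat.succ_sub hkn, pow_succ', ← Nat.div_div_eq_div_mul, pow_succ',
      ← Nat.div_div_eq_div_mul, ← ih]
    congr 1
    omega

lemma sum_range_collapse {M : Type*} [AddCommMonoid M] (ε : ℕ → ℕ → ℝ) (n : ℕ) (F : ℕ → M) :
    ∑ c ∈ Finset.range (4 ^ n), F (collapse ε n c) = 2 ^ n • ∑ i ∈ Finset.range (2 ^ n), F i := by
  induction n generalizing F with
  | zero => simp [collapse]
  | succ m ih =>
    have hdigit (p J : ℕ) : ∑ e ∈ Finset.range 4, F (2 * p + keptBit ε (m + 1) J e) =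
        2 • (F (2 * p) + F (2 * p + 1)) := by
      simp only [Finset.sum_range_succ, Finset.range_zero, Finset.sum_empty, keptBit]
      split_ifs <;> simp <;> abel
    have hcollapse (q e : ℕ) (he : e < 4) : collapse ε (m + 1) (q * 4 + e) =
        2 * collapse ε m q + keptBit ε (m + 1) (collapse ε m q + 1) e := by
      rw [collapse, show (q * 4 + e) / 4 = q by omega, show (q * 4 + e) % 4 = e by omega]
    rw [pow_succ, Finset.sum_range_mul_eq_sum_sum, pow_succ, Finset.sum_range_mul_eq_sum_sum]
    calc ∑ q ∈ Finset.range (4 ^ m), ∑ e ∈ Finset.range 4, F (collapse ε (m + 1) (q * 4 + e))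
        = ∑ q ∈ Finset.range (4 ^ m),
            2 • (F (2 * collapse ε m q) + F (2 * collapse ε m q + 1)) := by
          refine Finset.sum_congr rfl fun q _ => ?_
          rw [← hdigit _ (collapse ε m q + 1)]
          exact Finset.sum_congr rfl fun e he => by rw [hcollapse q e (Finset.mem_range.1 he)]
      _ = (2 ^ m * 2) • ∑ p ∈ Finset.range (2 ^ m), ∑ e ∈ Finset.range 2, F (p * 2 + e) := by
          rw [← Finset.smul_sum, ih fun p => F (2 * p) + F (2 * p + 1), smul_smul, mul_comm]
          simp [Finset.sum_range_succ, mul_comm]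

section
variable {X Y : Type*} [NormedAddCommGroup X] [NormedSpace ℝ X]
  [NormedAddCommGroup Y] [NormedSpace ℝ Y]

/-- The Haar index `J` at level `k = (l+1)/2` whose coefficient `spread` places at the node `j` of
level `l`: the node `c + 1` of level `2k - 1`, and both its children at level `2k`, stand for the
level-`2(k-1)` cell `c`. -/
noncomputable def sourceNode (ε : ℕ → ℕ → ℝ) (l j : ℕ) : ℕ :=
  collapse ε ((l + 1) / 2 - 1) (if l % 2 = 1 then j - 1 else (j - 1) / 2) + 1

noncomputable def spread (ε : ℕ → ℕ → ℝ) (z : ℕ → ℕ → X) (l j : ℕ) : X :=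
  (if splitLevel ε ((l + 1) / 2) (sourceNode ε l j) = l
    then haarAmp ((l + 1) / 2) / haarAmp l else 0) • z ((l + 1) / 2) (sourceNode ε l j)

lemma spread_map (ε : ℕ → ℕ → ℝ) (T : X →L[ℝ] Y) (z : ℕ → ℕ → X) :
    spread ε (fun k j => T (z k j)) = fun l j => T (spread ε z l j) := by
  ext l j
  rw [spread, spread, map_smul]

lemma levelTerm_spread_add_levelTerm_spread (ε : ℕ → ℕ → ℝ) (z : ℕ → ℕ → X) {δ : ℕ → ℝ}
    {η : ℕ → ℕ → ℝ} {k : ℕ} (hk : 1 ≤ k) (hδ : ∀ J, δ (splitLevel ε k J) = η k J) (c : ℕ) :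
    levelTerm (spread ε z) (fun l _ => δ l) (2 * k - 1) (c / 2) +
      levelTerm (spread ε z) (fun l _ => δ l) (2 * k) c = levelTerm z η k (collapse ε k c) := by
  obtain ⟨m, rfl⟩ : ∃ m, k = m + 1 := ⟨k - 1, by omega⟩
  have hJ := hδ (collapse ε m (c / 4) + 1)
  simp only [levelTerm, spread, sourceNode, collapse, keptBit, splitLevel,
    show (2 * (m + 1) - 1 + 1) / 2 = m + 1 by omega, show (2 * (m + 1) + 1) / 2 = m + 1 by omega,
    show (2 * (m + 1) - 1) % 2 = 1 by omega, show 2 * (m + 1) % 2 = 0 by omega,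
    show c / 2 / 2 = c / 4 by omega, Nat.add_sub_cancel, ↓reduceIte, zero_ne_one] at hJ ⊢
  generalize collapse ε m (c / 4) = p at hJ ⊢
  have hodd := (haarAmp_pos (2 * (m + 1) - 1)).ne'
  have heven := (haarAmp_pos (2 * (m + 1))).ne'
  by_cases hε : ε (m + 1) (p + 1) = -1
  · simp only [hε, ↓reduceIte, if_neg (show 2 * (m + 1) - 1 ≠ 2 * (m + 1) by omega),
      zero_smul, smul_zero, add_zero, smul_smul] at hJ ⊢
    rw [show (2 * p + c % 4 / 2 % 2) / 2 + 1 = p + 1 by omega,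
      show (2 * p + c % 4 / 2 % 2) % 2 = c / 2 % 2 by omega, ← hJ]
    congr 1
    field_simp
  · simp only [hε, ↓reduceIte, if_neg (show 2 * (m + 1) ≠ 2 * (m + 1) - 1 by omega),
      zero_smul, smul_zero, zero_add, smul_smul] at hJ ⊢
    rw [show (2 * p + c % 4 % 2) / 2 + 1 = p + 1 by omega,
      show (2 * p + c % 4 % 2) % 2 = c % 2 by omega, ← hJ]
    congr 1
    field_simp

lemma cellValue_spread (ε : ℕ → ℕ → ℝ) (z : ℕ → ℕ → X) {δ : ℕ → ℝ} {η : ℕ → ℕ → ℝ}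
    (hδ : ∀ k, 1 ≤ k → ∀ J, δ (splitLevel ε k J) = η k J) (n i : ℕ) :
    cellValue (spread ε z) (fun l _ => δ l) (2 * n) i = cellValue z η n (collapse ε n i) := by
  rw [cellValue, cellValue, Finset.sum_Icc_one_two_mul]
  refine Finset.sum_congr rfl fun k hk => ?_
  obtain ⟨hk1, hkn⟩ := Finset.mem_Icc.1 hk
  have h4 : (4 : ℕ) ^ (n - k) = 2 ^ (2 * n - 2 * k) := by rw [← Nat.mul_sub, pow_mul]; norm_num
  rw [collapse_div_two_pow ε hkn, ← levelTerm_spread_add_levelTerm_spread ε z hk1 (hδ k hk1), h4,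
    Nat.div_div_eq_div_mul, ← pow_succ, show 2 * n - 2 * k + 1 = 2 * n - (2 * k - 1) by omega]

lemma l2norm_walshSum_spread (ε : ℕ → ℕ → ℝ) (z : ℕ → ℕ → X) {δ : ℕ → ℝ} {η : ℕ → ℕ → ℝ}
    (hδ : ∀ k, 1 ≤ k → ∀ J, δ (splitLevel ε k J) = η k J) (n : ℕ) :
    l2norm (walshSum (spread ε z) (fun l _ => δ l) 1 (2 * n)) = l2norm (walshSum z η 1 n) := by
  rw [l2norm_walshSum, l2norm_walshSum]
  simp_rw [cellValue_spread ε z hδ]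
  rw [show (2 : ℕ) ^ (2 * n) = 4 ^ n by rw [pow_mul]; norm_num,
    sum_range_collapse ε n fun i => ‖cellValue z η n i‖ ^ 2, nsmul_eq_mul, ← mul_assoc]
  congr 2
  rw [Nat.cast_pow, Nat.cast_ofNat, mul_comm 2 n, pow_mul, sq, mul_inv,
    inv_mul_cancel_right₀ (by positivity)]

end

lemma neg_one_pow_splitLevel {ε : ℕ → ℕ → ℝ} (hε : ∀ k j, ε k j = 1 ∨ ε k j = -1) {k : ℕ}
    (hk : 1 ≤ k) (J : ℕ) : (-1 : ℝ) ^ splitLevel ε k J = ε k J := by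
  unfold splitLevel
  split_ifs with h
  · rw [h, Odd.neg_one_pow ⟨k - 1, by omega⟩]
  · rw [(hε k J).resolve_right h, Even.neg_one_pow ⟨k, by ring⟩]

end Haar

theorem mu_le_muCC_double_general {X Y : Type*} [NormedAddCommGroup X] [NormedSpace ℝ X]
    [NormedAddCommGroup Y] [NormedSpace ℝ Y] (T : X →L[ℝ] Y) (n : ℕ) :
    mu T n ≤ muCC T (2*n) := by
  have hC := le_max_right 1 (2 * (2 * n : ℕ) * ‖T‖ * √(2 ^ (2 * n)))
  refine csInf_le_csInf ⟨1, fun c hc => hc.1⟩ ⟨_, le_max_left _ _, fun x =>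
    (Haar.l2norm_walshSum_map_le T (fun k _ => by simp) (2 * n) x).trans
      (mul_le_mul_of_nonneg_right hC (Haar.l2norm_nonneg _))⟩ ?_
  rintro c ⟨hc1, hc⟩
  refine ⟨hc1, fun x ε hε => ?_⟩
  rw [← Haar.l2norm_walshSum_spread ε _ (fun k hk => Haar.neg_one_pow_splitLevel hε hk) n,
    ← Haar.l2norm_walshSum_spread ε x (δ := fun _ => 1) (η := fun _ _ => 1)
      (fun _ _ _ => rfl) n, Haar.spread_map]
  exact hc _

/-- Proposition 1: `μ_n(T) ≤ μ_{2n}°°(T)`. -/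
theorem mu_le_muCC_double {X Y : Type*} [NormedAddCommGroup X] [NormedSpace ℝ X]
    [NormedAddCommGroup Y] [NormedSpace ℝ Y] (T : X →L[ℝ] Y) (n : ℕ) (hn : 1 ≤ n) :
    mu T n ≤ muCC T (2*n) :=
  mu_le_muCC_double_general T n
end

section
/- Upper-part estimate: For any family (x_k^{(j)}) in X indexed by D_{n+1}^{2n} = {(k,j): n+1 ≤ k ≤ 2n, 1 ≤ j ≤ 2^{k-1}}, ‖Σ_{(k,j)∈D_{n+1}^{2n}} (−1)^k T x_k^{(j)} χ_k^{(j)}‖_{L_2} ≤ μ_n°°(T) ‖Σ_{(k,j)∈D_{n+1}^{2n}} x_k^{(j)} χ_k^{(j)}‖_{L_2}. -/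
open MeasureTheory Set

-- chunk 1: basic haar lemmas
lemma haar_amp_pos (k : ℕ) : (0:ℝ) < (2:ℝ) ^ (((k:ℝ)-1)/2) :=
  Real.rpow_pos_of_pos two_pos _

lemma ddle {c : ℝ} (hc : 0 < c) {a b : ℝ} : a/c ≤ b/c ↔ a ≤ b := by
  rw [div_le_div_iff₀ hc hc]
  exact mul_le_mul_iff_of_pos_right hc

lemma ddlt {c : ℝ} (hc : 0 < c) {a b : ℝ} : a/c < b/c ↔ a < b := by
  rw [div_lt_div_iff₀ hc hc]
  exact mul_lt_mul_iff_of_pos_right hc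

lemma haar_b01 (k j : ℕ) : ((2*(j:ℝ))-2)/2^k ≤ ((2*(j:ℝ))-1)/2^k :=
  (ddle (by positivity)).mpr (by linarith)

lemma haar_b12 (k j : ℕ) : ((2*(j:ℝ))-1)/2^k ≤ (2*(j:ℝ))/2^k :=
  (ddle (by positivity)).mpr (by linarith)

lemma haar_pos {k j : ℕ} {t : ℝ} (h1 : ((2*(j:ℝ))-2)/2^k ≤ t)
    (h2 : t < ((2*(j:ℝ))-1)/2^k) : haar k j t = (2:ℝ) ^ (((k:ℝ)-1)/2) := by
  unfold haar
  rw [if_pos ⟨h1, h2⟩]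

lemma haar_neg {k j : ℕ} {t : ℝ} (h1 : ((2*(j:ℝ))-1)/2^k ≤ t)
    (h2 : t < (2*(j:ℝ))/2^k) : haar k j t = -((2:ℝ) ^ (((k:ℝ)-1)/2)) := by
  unfold haar
  rw [if_neg, if_pos ⟨h1, h2⟩]
  rintro ⟨-, h⟩
  exact absurd h1 (not_le.mpr h)

lemma haar_zero_low {k j : ℕ} {t : ℝ} (h : t < ((2*(j:ℝ))-2)/2^k) : haar k j t = 0 := by
  unfold haar
  rw [if_neg, if_neg]
  · rintro ⟨h1, -⟩; exact absurd ((haar_b01 k j).trans h1) (not_le.mpr h)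
  · rintro ⟨h1, -⟩; exact absurd h1 (not_le.mpr h)

lemma haar_zero_high {k j : ℕ} {t : ℝ} (h : (2*(j:ℝ))/2^k ≤ t) : haar k j t = 0 := by
  unfold haar
  rw [if_neg, if_neg]
  · rintro ⟨-, h2⟩; exact absurd (h2.trans_le h) (lt_irrefl _)
  · rintro ⟨-, h2⟩; exact absurd ((h2.trans_le (haar_b12 k j)).trans_le h) (lt_irrefl _)

lemma haar_ne_zero_mem {k j : ℕ} {t : ℝ} (h : haar k j t ≠ 0) :
    ((2*(j:ℝ))-2)/2^k ≤ t ∧ t < (2*(j:ℝ))/2^k := by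
  constructor
  · by_contra hc
    exact h (haar_zero_low (not_le.mp hc))
  · by_contra hc
    exact h (haar_zero_high (not_lt.mp hc))

lemma abs_haar_le (k j : ℕ) (t : ℝ) : |haar k j t| ≤ (2:ℝ) ^ (((k:ℝ)-1)/2) := by
  unfold haar
  split_ifs
  · rw [abs_of_pos (haar_amp_pos k)]
  · rw [abs_neg, abs_of_pos (haar_amp_pos k)]
  · simp [(haar_amp_pos k).le]

lemma measurable_haar (k j : ℕ) : Measurable (haar k j) := by
  unfold haar
  refine Measurable.ite ?_ measurable_const (Measurable.ite ?_ measurable_const measurable_const)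
  · exact (measurableSet_Ico : MeasurableSet (Ico (((2*(j:ℝ))-2)/2^k) (((2*(j:ℝ))-1)/2^k)))
  · exact (measurableSet_Ico : MeasurableSet (Ico (((2*(j:ℝ))-1)/2^k) ((2*(j:ℝ))/2^k)))
-- chunk 2: dyadic constancy
lemma dyadic_le {N k : ℕ} (hk : k ≤ N) (c : ℤ) (m : ℕ) {t : ℝ}
    (h1 : (m:ℝ)/2^N ≤ t) (h2 : t < ((m:ℝ)+1)/2^N) :
    ((c:ℝ)/2^k ≤ t ↔ (c:ℝ)/2^k ≤ (m:ℝ)/2^N) := by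
  have hN : (0:ℝ) < 2^N := by positivity
  have hNk : (2:ℝ)^(N-k) * 2^k = 2^N := by rw [← pow_add]; congr 1; omega
  have hd : ((c:ℝ))/2^k = ((c * 2^(N-k) : ℤ) : ℝ)/2^N := by
    push_cast
    rw [div_eq_div_iff (by positivity) hN.ne', mul_assoc, hNk]
  rw [hd]
  constructor
  · intro h
    have h3 : ((c * 2^(N-k) : ℤ):ℝ) < (m:ℝ)+1 := (ddlt hN).mp (h.trans_lt h2)
    have h4 : (c * 2^(N-k) : ℤ) < (m:ℤ)+1 := by exact_mod_cast h3
    have h5 : ((c*2^(N-k):ℤ):ℝ) ≤ (m:ℝ) := by exact_mod_cast (by omega : (c*2^(N-k):ℤ) ≤ (m:ℤ))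
    exact (ddle hN).mpr h5
  · intro h; exact h.trans h1

lemma dyadic_lt {N k : ℕ} (hk : k ≤ N) (c : ℤ) (m : ℕ) {t : ℝ}
    (h1 : (m:ℝ)/2^N ≤ t) (h2 : t < ((m:ℝ)+1)/2^N) :
    (t < (c:ℝ)/2^k ↔ (m:ℝ)/2^N < (c:ℝ)/2^k) := by
  have hN : (0:ℝ) < 2^N := by positivity
  have hNk : (2:ℝ)^(N-k) * 2^k = 2^N := by rw [← pow_add]; congr 1; omega
  have hd : ((c:ℝ))/2^k = ((c * 2^(N-k) : ℤ) : ℝ)/2^N := by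
    push_cast
    rw [div_eq_div_iff (by positivity) hN.ne', mul_assoc, hNk]
  rw [hd]
  constructor
  · intro h; exact h1.trans_lt h
  · intro h
    have h4 : (m:ℤ) < c*2^(N-k) := by exact_mod_cast (ddlt hN).mp h
    have h5 : ((m:ℝ)+1) ≤ ((c*2^(N-k):ℤ):ℝ) := by
      exact_mod_cast (by omega : (m:ℤ)+1 ≤ c*2^(N-k))
    exact h2.trans_le ((ddle hN).mpr h5)

lemma haar_constOn {k j N : ℕ} (hk : k ≤ N) (m : ℕ) {t s : ℝ}
    (ht1 : (m:ℝ)/2^N ≤ t) (ht2 : t < ((m:ℝ)+1)/2^N)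
    (hs1 : (m:ℝ)/2^N ≤ s) (hs2 : s < ((m:ℝ)+1)/2^N) :
    haar k j t = haar k j s := by
  have e0 : ((2*(j:ℝ))-2)/2^k = ((2*(j:ℤ)-2 : ℤ):ℝ)/2^k := by push_cast; ring
  have e1 : ((2*(j:ℝ))-1)/2^k = ((2*(j:ℤ)-1 : ℤ):ℝ)/2^k := by push_cast; ring
  have e2 : ((2*(j:ℝ)))/2^k = ((2*(j:ℤ) : ℤ):ℝ)/2^k := by push_cast; ring
  have T0 : (((2*(j:ℝ))-2)/2^k ≤ t) ↔ (((2*(j:ℝ))-2)/2^k ≤ s) := by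
    rw [e0, dyadic_le hk _ m ht1 ht2, ← dyadic_le hk _ m hs1 hs2]
  have T1 : (t < ((2*(j:ℝ))-1)/2^k) ↔ (s < ((2*(j:ℝ))-1)/2^k) := by
    rw [e1, dyadic_lt hk _ m ht1 ht2, ← dyadic_lt hk _ m hs1 hs2]
  have T1' : (((2*(j:ℝ))-1)/2^k ≤ t) ↔ (((2*(j:ℝ))-1)/2^k ≤ s) := by
    rw [e1, dyadic_le hk _ m ht1 ht2, ← dyadic_le hk _ m hs1 hs2]
  have T2 : (t < ((2*(j:ℝ)))/2^k) ↔ (s < ((2*(j:ℝ)))/2^k) := by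
    rw [e2, dyadic_lt hk _ m ht1 ht2, ← dyadic_lt hk _ m hs1 hs2]
  by_cases h1 : ((2*(j:ℝ))-2)/2^k ≤ t
  · by_cases h2 : t < ((2*(j:ℝ))-1)/2^k
    · rw [haar_pos h1 h2, haar_pos (T0.mp h1) (T1.mp h2)]
    · by_cases h4 : t < ((2*(j:ℝ)))/2^k
      · rw [haar_neg (not_lt.mp h2) h4, haar_neg (T1'.mp (not_lt.mp h2)) (T2.mp h4)]
      · rw [haar_zero_high (not_lt.mp h4), haar_zero_high (not_lt.mp (fun hs => (not_lt.mpr (not_lt.mp h4)).elim (T2.mpr hs)))]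
  · rw [haar_zero_low (not_le.mp h1), haar_zero_low (not_le.mp (fun hs => h1 (T0.mpr hs)))]
-- chunk 3: self-similarity and vanishing
lemma haar_selfsim {k' : ℕ} (hk' : 1 ≤ k') (n q j' : ℕ) (t : ℝ) :
    haar (k'+n) (j' + q*2^(k'-1)) ((t+(q:ℝ))/2^n) =
      (2:ℝ)^((n:ℝ)/2) * haar k' j' t := by
  have h2n : (0:ℝ) < 2^n := by positivity
  have h2k : (0:ℝ) < 2^k' := by positivity
  have hsplit : (2:ℝ)^(k'-1) * 2 = 2^k' := by rw [← pow_succ]; congr 1; omega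
  have hpow : ((2:ℝ)^(k'+n)) = 2^k' * 2^n := pow_add 2 k' n
  have e1 : (2*((j':ℝ) + (q:ℝ)*2^(k'-1))-2)/2^(k'+n) = ((2*(j':ℝ)-2)/2^k' + q)/2^n := by
    rw [hpow]
    field_simp
    nlinarith [hsplit]
  have e2 : (2*((j':ℝ) + (q:ℝ)*2^(k'-1))-1)/2^(k'+n) = ((2*(j':ℝ)-1)/2^k' + q)/2^n := by
    rw [hpow]
    field_simp
    nlinarith [hsplit]
  have e3 : (2*((j':ℝ) + (q:ℝ)*2^(k'-1)))/2^(k'+n) = ((2*(j':ℝ))/2^k' + q)/2^n := by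
    rw [hpow]
    field_simp
    nlinarith [hsplit]
  have hcast : (2*((j' + q*2^(k'-1) : ℕ)):ℝ) = 2*((j':ℝ) + (q:ℝ)*2^(k'-1)) := by push_cast; ring
  have eA : (2:ℝ)^(((↑(k'+n):ℝ)-1)/2) = (2:ℝ)^((n:ℝ)/2) * (2:ℝ)^(((k':ℝ)-1)/2) := by
    rw [← Real.rpow_add two_pos]
    congr 1
    push_cast
    ring
  by_cases h1 : ((2*(j':ℝ))-2)/2^k' ≤ t
  · by_cases h2 : t < ((2*(j':ℝ))-1)/2^k'
    · rw [haar_pos h1 h2, haar_pos (k := k'+n) (j := j' + q*2^(k'-1)) ?_ ?_, eA]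
      · rw [hcast, e1, ddle h2n, add_le_add_iff_right]; exact h1
      · rw [hcast, e2, ddlt h2n, add_lt_add_iff_right]; exact h2
    · by_cases h4 : t < ((2*(j':ℝ)))/2^k'
      · rw [haar_neg (not_lt.mp h2) h4, haar_neg (k := k'+n) (j := j' + q*2^(k'-1)) ?_ ?_, eA]
        · ring
        · rw [hcast, e2, ddle h2n, add_le_add_iff_right]; exact not_lt.mp h2
        · rw [hcast, e3, ddlt h2n, add_lt_add_iff_right]; exact h4
      · rw [haar_zero_high (not_lt.mp h4), haar_zero_high (k := k'+n) (j := j' + q*2^(k'-1)) ?_, mul_zero]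
        rw [hcast, e3, ddle h2n, add_le_add_iff_right]; exact not_lt.mp h4
  · rw [haar_zero_low (not_le.mp h1), haar_zero_low (k := k'+n) (j := j' + q*2^(k'-1)) ?_, mul_zero]
    rw [hcast, e1, ddlt h2n, add_lt_add_iff_right]; exact not_le.mp h1

lemma haar_vanish {k' n q j : ℕ} (hk' : 1 ≤ k')
    (hout : j ≤ q*2^(k'-1) ∨ (q+1)*2^(k'-1) < j) {t : ℝ} (ht0 : 0 ≤ t) (ht1 : t < 1) :
    haar (k'+n) j ((t+(q:ℝ))/2^n) = 0 := by
  have h2n : (0:ℝ) < 2^n := by positivity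
  have h2k : (0:ℝ) < 2^k' := by positivity
  have hpow : ((2:ℝ)^(k'+n)) = 2^k' * 2^n := pow_add 2 k' n
  have hsplit : (2:ℝ)^(k'-1) * 2 = 2^k' := by rw [← pow_succ]; congr 1; omega
  have hs1 : (q:ℝ)/2^n ≤ (t+(q:ℝ))/2^n := (ddle h2n).mpr (by linarith)
  have hs2 : (t+(q:ℝ))/2^n < ((q:ℝ)+1)/2^n := (ddlt h2n).mpr (by linarith)
  rcases hout with h | h
  · apply haar_zero_high
    have hc : (j:ℝ) ≤ (q:ℝ)*2^(k'-1) := by exact_mod_cast h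
    have hb : (2*(j:ℝ))/2^(k'+n) ≤ (q:ℝ)/2^n := by
      rw [hpow, div_le_div_iff₀ (by positivity) h2n]
      have h3 : 2*(j:ℝ) ≤ (q:ℝ)*2^k' := by nlinarith [hsplit, hc]
      nlinarith [mul_le_mul_of_nonneg_right h3 h2n.le]
    exact hb.trans hs1
  · apply haar_zero_low
    have hc : ((q:ℝ)+1)*2^(k'-1) + 1 ≤ (j:ℝ) := by exact_mod_cast h
    have hb : ((q:ℝ)+1)/2^n ≤ ((2*(j:ℝ))-2)/2^(k'+n) := by
      rw [hpow, div_le_div_iff₀ h2n (by positivity)]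
      have h3 : ((q:ℝ)+1)*2^k' ≤ 2*(j:ℝ) - 2 := by nlinarith [hsplit, hc]
      nlinarith [mul_le_mul_of_nonneg_right h3 h2n.le]
    exact hs2.trans_le hb
-- chunk 4: step integral
lemma l2norm_nonneg {X : Type*} [NormedAddCommGroup X] (g : ℝ → X) : 0 ≤ l2norm g :=
  Real.sqrt_nonneg _

lemma exists_dyadic (N : ℕ) {t : ℝ} (h0 : 0 ≤ t) (h1 : t < 1) :
    ∃ m : ℕ, m < 2^N ∧ (m:ℝ)/2^N ≤ t ∧ t < ((m:ℝ)+1)/2^N := by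
  have hpow : (0:ℝ) < 2^N := by positivity
  set u := t * 2^N with hu
  have hu0 : 0 ≤ u := by positivity
  have hu1 : u < 2^N := by rw [hu]; nlinarith
  have hge : (0:ℤ) ≤ ⌊u⌋ := Int.floor_nonneg.mpr hu0
  have hcast : ((⌊u⌋.toNat : ℕ) : ℝ) = ((⌊u⌋:ℤ) : ℝ) := by exact_mod_cast Int.toNat_of_nonneg hge
  refine ⟨⌊u⌋.toNat, ?_, ?_, ?_⟩
  · have h2 : ((⌊u⌋:ℤ) : ℝ) < 2^N := (Int.floor_le u).trans_lt hu1
    have h3 : ⌊u⌋ < ((2^N : ℕ) : ℤ) := by exact_mod_cast h2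
    omega
  · rw [div_le_iff₀ hpow, hcast]
    exact Int.floor_le u
  · rw [lt_div_iff₀ hpow, hcast]
    exact Int.lt_floor_add_one u

lemma Ico_eq_biUnion (N : ℕ) :
    Ico (0:ℝ) 1 = ⋃ m ∈ Finset.range (2^N), Ico ((m:ℝ)/2^N) (((m:ℝ)+1)/2^N) := by
  ext t
  simp only [mem_Ico, Set.mem_iUnion, Finset.mem_range, exists_prop]
  constructor
  · rintro ⟨h0, h1⟩
    obtain ⟨m, hm, h2, h3⟩ := exists_dyadic N h0 h1
    exact ⟨m, hm, h2, h3⟩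
  · rintro ⟨m, hm, h2, h3⟩
    refine ⟨le_trans (by positivity) h2, h3.trans_le ?_⟩
    rw [div_le_one (by positivity)]
    have : (m+1 : ℕ) ≤ 2^N := hm
    exact_mod_cast this

lemma integral_step {E : Type*} [NormedAddCommGroup E] [NormedSpace ℝ E] [CompleteSpace E] (N : ℕ) (f : ℝ → E)
    (hf : ∀ m : ℕ, ∀ t : ℝ, (m:ℝ)/2^N ≤ t → t < ((m:ℝ)+1)/2^N → f t = f ((m:ℝ)/2^N)) :
    ∫ t in Ico (0:ℝ) 1, f t = ∑ m ∈ Finset.range (2^N), ((2:ℝ)^N)⁻¹ • f ((m:ℝ)/2^N) := by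
  have hpow : (0:ℝ) < 2^N := by positivity
  rw [Ico_eq_biUnion N, MeasureTheory.integral_biUnion_finset]
  · refine Finset.sum_congr rfl fun m _ => ?_
    rw [setIntegral_congr_fun measurableSet_Ico (fun t ht => hf m t ht.1 ht.2)]
    rw [setIntegral_const, measureReal_def, Real.volume_Ico]
    congr 1
    rw [show ((m:ℝ)+1)/2^N - (m:ℝ)/2^N = ((2:ℝ)^N)⁻¹ by field_simp; ring]
    exact ENNReal.toReal_ofReal (by positivity)
  · exact fun i _ => measurableSet_Ico
  · intro i _ j _ hij
    have : ∀ a b : ℕ, a < b →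
        Disjoint (Ico ((a:ℝ)/2^N) (((a:ℝ)+1)/2^N)) (Ico ((b:ℝ)/2^N) (((b:ℝ)+1)/2^N)) := by
      intro a b hab
      rw [Set.Ico_disjoint_Ico]
      refine le_trans (min_le_left _ _) (le_trans ?_ (le_max_right _ _))
      apply (ddle hpow).mpr
      have : (a+1 : ℕ) ≤ b := hab
      exact_mod_cast this
    rcases lt_or_gt_of_ne hij with h | h
    · exact this i j h
    · exact (this j i h).symm
  · intro i _
    apply MeasureTheory.IntegrableOn.congr_fun
      (f := fun _ => f ((i:ℝ)/2^N)) ?_ (fun t ht => (hf i t ht.1 ht.2).symm) measurableSet_Ico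
    apply (integrableOn_const_iff enorm_ne_top).mpr
    right
    rw [Real.volume_Ico]
    exact ENNReal.ofReal_lt_top

lemma walshSum_dyadic {X : Type*} [NormedAddCommGroup X] [NormedSpace ℝ X]
    (y : ℕ → ℕ → X) (ε : ℕ → ℕ → ℝ) (a b N : ℕ) (hb : b ≤ N) (m : ℕ) {t : ℝ}
    (h1 : (m:ℝ)/2^N ≤ t) (h2 : t < ((m:ℝ)+1)/2^N) :
    walshSum y ε a b t = walshSum y ε a b ((m:ℝ)/2^N) := by
  have hpow : (0:ℝ) < 2^N := by positivity
  unfold walshSum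
  refine Finset.sum_congr rfl fun k hk => Finset.sum_congr rfl fun j _ => ?_
  have hkN : k ≤ N := le_trans (Finset.mem_Icc.mp hk).2 hb
  rw [haar_constOn hkN m h1 h2 (le_refl _) ((ddlt hpow).mpr (by linarith))]

lemma l2normsq {X : Type*} [NormedAddCommGroup X] [NormedSpace ℝ X]
    (y : ℕ → ℕ → X) (ε : ℕ → ℕ → ℝ) (a b N : ℕ) (hb : b ≤ N) :
    l2norm (walshSum y ε a b) ^ 2 =
      ∑ m ∈ Finset.range (2^N), ((2:ℝ)^N)⁻¹ * ‖walshSum y ε a b ((m:ℝ)/2^N)‖^2 := by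
  unfold l2norm
  rw [Real.sq_sqrt (setIntegral_nonneg measurableSet_Ico (fun t _ => by positivity))]
  rw [integral_step N (fun t => ‖walshSum y ε a b t‖^2)
    (fun m t h1 h2 => show ‖walshSum y ε a b t‖^2 = ‖walshSum y ε a b ((m:ℝ)/2^N)‖^2 by
      rw [walshSum_dyadic y ε a b N hb m h1 h2])]
  simp [smul_eq_mul]
-- chunk 5: reindexing
lemma walshSum_upper {X : Type*} [NormedAddCommGroup X] [NormedSpace ℝ X]
    (y : ℕ → ℕ → X) (σ : ℕ → ℕ → ℝ) (n q : ℕ) (hn : 1 ≤ n) (hq : q < 2^n)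
    {t : ℝ} (ht0 : 0 ≤ t) (ht1 : t < 1) :
    walshSum y σ (n+1) (2*n) ((t+(q:ℝ))/2^n) =
      (2:ℝ)^((n:ℝ)/2) • walshSum (fun k j => y (k+n) (j + q*2^(k-1)))
        (fun k j => σ (k+n) (j + q*2^(k-1))) 1 n t := by
  unfold walshSum
  rw [Finset.smul_sum]
  rw [show Finset.Icc (n+1) (2*n) = (Finset.Icc 1 n).map (addRightEmbedding n) by
    rw [Finset.map_add_right_Icc]; congr 1 <;> omega]
  rw [Finset.sum_map]
  refine Finset.sum_congr rfl fun k hk => ?_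
  obtain ⟨hk1, hk2⟩ := Finset.mem_Icc.mp hk
  simp only [addRightEmbedding_apply]
  rw [Finset.smul_sum]
  have hsub : Finset.Icc (q*2^(k-1)+1) ((q+1)*2^(k-1)) ⊆ Finset.Icc 1 (2^(k+n-1)) := by
    intro j hj
    rw [Finset.mem_Icc] at hj ⊢
    refine ⟨by omega, ?_⟩
    calc j ≤ (q+1)*2^(k-1) := hj.2
      _ ≤ 2^n * 2^(k-1) := Nat.mul_le_mul_right _ (by omega)
      _ = 2^(k+n-1) := by rw [← pow_add]; congr 1; omega
  have hzero : ∀ j ∈ Finset.Icc 1 (2^(k+n-1)), j ∉ Finset.Icc (q*2^(k-1)+1) ((q+1)*2^(k-1)) →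
      (σ (k+n) j * haar (k+n) j ((t+(q:ℝ))/2^n)) • y (k+n) j = 0 := by
    intro j hj hj'
    rw [Finset.mem_Icc] at hj hj'
    have hout : j ≤ q*2^(k-1) ∨ (q+1)*2^(k-1) < j := by omega
    rw [haar_vanish hk1 hout ht0 ht1, mul_zero, zero_smul]
  rw [← Finset.sum_subset hsub hzero]
  rw [show Finset.Icc (q*2^(k-1)+1) ((q+1)*2^(k-1)) =
      (Finset.Icc 1 (2^(k-1))).map (addRightEmbedding (q*2^(k-1))) by
    rw [Finset.map_add_right_Icc]; congr 1 <;> ring]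
  rw [Finset.sum_map]
  refine Finset.sum_congr rfl fun j hj => ?_
  simp only [addRightEmbedding_apply]
  rw [haar_selfsim hk1 n q j t, smul_smul]
  congr 1
  ring

lemma sum_range_mul_div {M : Type*} [AddCommMonoid M] (a b : ℕ) (hb : 0 < b) (f : ℕ → M) :
    ∑ m ∈ Finset.range (a*b), f m = ∑ q ∈ Finset.range a, ∑ r ∈ Finset.range b, f (q*b + r) := by
  rw [← Finset.sum_product']
  refine Finset.sum_nbij' (i := fun m => (m / b, m % b)) (j := fun p => p.1*b + p.2)
    ?_ ?_ ?_ ?_ ?_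
  · intro m hm
    rw [Finset.mem_range] at hm
    rw [Finset.mem_product, Finset.mem_range, Finset.mem_range]
    exact ⟨Nat.div_lt_of_lt_mul (by rwa [Nat.mul_comm] at hm), Nat.mod_lt _ hb⟩
  · intro p hp
    rw [Finset.mem_product, Finset.mem_range, Finset.mem_range] at hp
    rw [Finset.mem_range]
    calc p.1*b + p.2 < p.1*b + b := by omega
      _ = (p.1+1)*b := by ring
      _ ≤ a*b := Nat.mul_le_mul_right _ (by omega)
  · intro m _
    show m / b * b + m % b = m
    rw [Nat.mul_comm]
    exact Nat.div_add_mod m b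
  · intro p hp
    rw [Finset.mem_product, Finset.mem_range, Finset.mem_range] at hp
    have h1 : (p.1*b + p.2) / b = p.1 := by
      rw [add_comm, Nat.add_mul_div_right _ _ hb, Nat.div_eq_of_lt hp.2, Nat.zero_add]
    have h2 : (p.1*b + p.2) % b = p.2 := by
      rw [add_comm, Nat.add_mul_mod_self_right, Nat.mod_eq_of_lt hp.2]
    simp [h1, h2]
  · intro m _
    show f m = f (m / b * b + m % b)
    have hh : m / b * b + m % b = m := by
      rw [Nat.mul_comm]; exact Nat.div_add_mod m b
    rw [hh]
-- chunk 6: decomposition of upper-part L2 norm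
lemma rpow_half_sq (n : ℕ) : ((2:ℝ)^((n:ℝ)/2))^2 = (2:ℝ)^(n:ℕ) := by
  rw [sq, ← Real.rpow_add two_pos, show (n:ℝ)/2+(n:ℝ)/2 = (n:ℝ) by ring, Real.rpow_natCast]

lemma upper_decomp {X : Type*} [NormedAddCommGroup X] [NormedSpace ℝ X]
    (y : ℕ → ℕ → X) (σ : ℕ → ℕ → ℝ) (n : ℕ) (hn : 1 ≤ n) :
    l2norm (walshSum y σ (n+1) (2*n)) ^ 2 =
      ∑ q ∈ Finset.range (2^n),
        l2norm (walshSum (fun k j => y (k+n) (j + q*2^(k-1)))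
          (fun k j => σ (k+n) (j + q*2^(k-1))) 1 n) ^ 2 := by
  have h2n : (0:ℝ) < 2^n := by positivity
  have hD : ((2:ℝ)^(2*n)) = 2^n * 2^n := by rw [two_mul, pow_add]
  rw [l2normsq y σ (n+1) (2*n) (2*n) le_rfl]
  rw [show (2:ℕ)^(2*n) = 2^n * 2^n by rw [two_mul, pow_add]]
  rw [sum_range_mul_div _ _ (Nat.pow_pos (n := n) two_pos) _]
  refine Finset.sum_congr rfl fun q hq => ?_
  rw [l2normsq _ _ 1 n n le_rfl]
  refine Finset.sum_congr rfl fun r hr => ?_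
  have hq' := Finset.mem_range.mp hq
  have hr' := Finset.mem_range.mp hr
  have hrr : (r:ℝ) < 2^n := by exact_mod_cast hr'
  have harg : ((q*2^n + r : ℕ):ℝ)/2^(2*n) = (((r:ℝ)/2^n) + (q:ℝ))/2^n := by
    push_cast
    rw [hD]
    field_simp
    ring
  rw [harg, walshSum_upper y σ n q hn hq' (by positivity) ((div_lt_one h2n).mpr hrr)]
  rw [norm_smul, mul_pow, Real.norm_eq_abs, abs_of_pos (Real.rpow_pos_of_pos two_pos _),
    rpow_half_sq, hD]
  field_simp
-- chunk 7: orthogonality of the Haar system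
lemma haar_eq_indicator (k j : ℕ) (t : ℝ) :
    haar k j t = (2:ℝ)^(((k:ℝ)-1)/2) *
        (Ico (((2*(j:ℝ))-2)/2^k) (((2*(j:ℝ))-1)/2^k)).indicator (fun _ => (1:ℝ)) t
      - (2:ℝ)^(((k:ℝ)-1)/2) *
        (Ico (((2*(j:ℝ))-1)/2^k) ((2*(j:ℝ))/2^k)).indicator (fun _ => (1:ℝ)) t := by
  by_cases h1 : ((2*(j:ℝ))-2)/2^k ≤ t ∧ t < ((2*(j:ℝ))-1)/2^k
  · rw [haar_pos h1.1 h1.2, indicator_of_mem (mem_Ico.mpr h1),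
      indicator_of_notMem (fun hm => absurd (mem_Ico.mp hm).1 (not_le.mpr h1.2))]
    ring
  · by_cases h2 : ((2*(j:ℝ))-1)/2^k ≤ t ∧ t < (2*(j:ℝ))/2^k
    · rw [haar_neg h2.1 h2.2, indicator_of_mem (mem_Ico.mpr h2),
        indicator_of_notMem (fun hm => absurd (mem_Ico.mp hm).2 (not_lt.mpr h2.1))]
      ring
    · have hz : haar k j t = 0 := by
        unfold haar
        rw [if_neg h1, if_neg h2]
      rw [hz, indicator_of_notMem (fun hm => h1 (mem_Ico.mp hm)),
        indicator_of_notMem (fun hm => h2 (mem_Ico.mp hm))]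
      ring

instance : IsFiniteMeasure (volume.restrict (Ico (0:ℝ) 1)) := by
  constructor
  rw [Measure.restrict_apply_univ, Real.volume_Ico]
  exact ENNReal.ofReal_lt_top

lemma integral_indicator_Ico {a b : ℝ} (h0 : 0 ≤ a) (hab : a ≤ b) (h1 : b ≤ 1) :
    ∫ t in Ico (0:ℝ) 1, (Ico a b).indicator (fun _ => (1:ℝ)) t = b - a := by
  rw [setIntegral_indicator measurableSet_Ico]
  rw [show Ico (0:ℝ) 1 ∩ Ico a b = Ico a b by
    rw [inter_eq_right]
    exact fun u hu => ⟨h0.trans hu.1, hu.2.trans_le h1⟩]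
  rw [setIntegral_const, measureReal_def, Real.volume_Ico, smul_eq_mul, mul_one,
    ENNReal.toReal_ofReal (by linarith)]

lemma integrable_indicator_Ico (a b : ℝ) :
    Integrable ((Ico a b).indicator (fun _ => (1:ℝ))) (volume.restrict (Ico (0:ℝ) 1)) :=
  (integrable_const (1:ℝ)).indicator measurableSet_Ico

lemma haar_bounds {k j : ℕ} (hk : 1 ≤ k) (hj1 : 1 ≤ j) (hj2 : j ≤ 2^(k-1)) :
    (0:ℝ) ≤ ((2*(j:ℝ))-2)/2^k ∧ (2*(j:ℝ))/2^k ≤ 1 := by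
  have h2k : (0:ℝ) < 2^k := by positivity
  have hj1' : (1:ℝ) ≤ (j:ℝ) := by exact_mod_cast hj1
  have hj2' : (j:ℝ) ≤ 2^(k-1) := by exact_mod_cast hj2
  have hs : (2:ℝ)^(k-1) * 2 = 2^k := by rw [← pow_succ]; congr 1; omega
  constructor
  · apply div_nonneg (by linarith) h2k.le
  · rw [div_le_one h2k]
    nlinarith
 
lemma integral_haar {k j : ℕ} (hk : 1 ≤ k) (hj1 : 1 ≤ j) (hj2 : j ≤ 2^(k-1)) :
    ∫ t in Ico (0:ℝ) 1, haar k j t = 0 := by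
  obtain ⟨hb0, hb1⟩ := haar_bounds hk hj1 hj2
  simp only [haar_eq_indicator k j]
  rw [integral_sub ((integrable_indicator_Ico _ _).const_mul _)
    ((integrable_indicator_Ico _ _).const_mul _)]
  rw [MeasureTheory.integral_const_mul, MeasureTheory.integral_const_mul,
    integral_indicator_Ico hb0 (haar_b01 k j) ((haar_b12 k j).trans hb1),
    integral_indicator_Ico (hb0.trans (haar_b01 k j)) (haar_b12 k j) hb1]
  ring

lemma integral_haar_sq {k j : ℕ} (hk : 1 ≤ k) (hj1 : 1 ≤ j) (hj2 : j ≤ 2^(k-1)) :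
    ∫ t in Ico (0:ℝ) 1, haar k j t * haar k j t = 1 := by
  obtain ⟨hb0, hb1⟩ := haar_bounds hk hj1 hj2
  have h2k : (0:ℝ) < 2^k := by positivity
  have key : ∀ t : ℝ, haar k j t * haar k j t =
      ((2:ℝ)^((k:ℝ)-1)) * (Ico (((2*(j:ℝ))-2)/2^k) ((2*(j:ℝ))/2^k)).indicator (fun _ => (1:ℝ)) t := by
    intro t
    have hamp : (2:ℝ)^(((k:ℝ)-1)/2) * (2:ℝ)^(((k:ℝ)-1)/2) = (2:ℝ)^((k:ℝ)-1) := by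
      rw [← Real.rpow_add two_pos]; congr 1; ring
    by_cases h1 : ((2*(j:ℝ))-2)/2^k ≤ t ∧ t < ((2*(j:ℝ))-1)/2^k
    · rw [haar_pos h1.1 h1.2, indicator_of_mem (mem_Ico.mpr ⟨h1.1, h1.2.trans_le (haar_b12 k j)⟩)]
      rw [mul_one, hamp]
    · by_cases h2 : ((2*(j:ℝ))-1)/2^k ≤ t ∧ t < (2*(j:ℝ))/2^k
      · rw [haar_neg h2.1 h2.2, indicator_of_mem (mem_Ico.mpr ⟨(haar_b01 k j).trans h2.1, h2.2⟩)]
        rw [mul_one, neg_mul_neg, hamp]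
      · have hz : haar k j t = 0 := by unfold haar; rw [if_neg h1, if_neg h2]
        rw [hz, indicator_of_notMem, mul_zero, mul_zero]
        intro hm
        rw [mem_Ico] at hm
        rcases lt_or_ge t (((2*(j:ℝ))-1)/2^k) with h | h
        · exact h1 ⟨hm.1, h⟩
        · exact h2 ⟨h, hm.2⟩
  simp only [key]
  rw [MeasureTheory.integral_const_mul, integral_indicator_Ico hb0 ((haar_b01 k j).trans (haar_b12 k j)) hb1]
  have hkc : (2:ℝ)^((k:ℝ)) = (2:ℝ)^(k:ℕ) := Real.rpow_natCast 2 k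
  rw [Real.rpow_sub two_pos, Real.rpow_one, hkc]
  field_simp
  ring
-- chunk 8: mixed products
lemma integral_haar_mul_lt {k j k' j' : ℕ} (hkk' : k < k') (hj'1 : 1 ≤ j') (hj'2 : j' ≤ 2^(k'-1)) :
    ∫ t in Ico (0:ℝ) 1, haar k j t * haar k' j' t = 0 := by
  have hk'1 : 1 ≤ k' := by omega
  have hN : (0:ℝ) < 2^(k'-1) := by positivity
  have hj'r : (1:ℝ) ≤ (j':ℝ) := by exact_mod_cast hj'1
  have hcast : ((j' - 1 : ℕ) : ℝ) = (j':ℝ) - 1 := by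
    have : (1:ℕ) ≤ j' := hj'1
    push_cast [this]
    ring
  have hsplit : (2:ℝ)^(k'-1) * 2 = 2^k' := by rw [← pow_succ]; congr 1; omega
  have hlow : ((2*(j':ℝ))-2)/2^k' = ((j' - 1 : ℕ):ℝ)/2^(k'-1) := by
    rw [hcast, div_eq_div_iff (by positivity) hN.ne']
    nlinarith [hsplit]
  have hhigh : ((2*(j':ℝ)))/2^k' = (((j' - 1 : ℕ):ℝ)+1)/2^(k'-1) := by
    rw [hcast, div_eq_div_iff (by positivity) hN.ne']
    nlinarith [hsplit]
  have key : ∀ t : ℝ, haar k j t * haar k' j' t =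
      haar k j (((j' - 1 : ℕ):ℝ)/2^(k'-1)) * haar k' j' t := by
    intro t
    by_cases h : haar k' j' t = 0
    · rw [h, mul_zero, mul_zero]
    · have hmem := haar_ne_zero_mem h
      congr 1
      refine haar_constOn (N := k'-1) (by omega) (j'-1) ?_ ?_ (le_refl _) ?_
      · rw [← hlow]; exact hmem.1
      · rw [← hhigh]; exact hmem.2
      · exact (ddlt hN).mpr (by linarith)
  simp only [key]
  rw [MeasureTheory.integral_const_mul, integral_haar hk'1 hj'1 hj'2, mul_zero]

lemma integral_haar_mul_ne {k j j' : ℕ} (hne : j ≠ j') :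
    ∫ t in Ico (0:ℝ) 1, haar k j t * haar k j' t = 0 := by
  have h2k : (0:ℝ) < 2^k := by positivity
  have key : ∀ t : ℝ, haar k j t * haar k j' t = 0 := by
    intro t
    by_cases h : haar k j t = 0
    · rw [h, zero_mul]
    · have hm := haar_ne_zero_mem h
      have hz : haar k j' t = 0 := by
        rcases lt_or_gt_of_ne hne with hlt | hlt
        · apply haar_zero_low
          have hc : (j:ℝ)+1 ≤ (j':ℝ) := by exact_mod_cast hlt
          exact hm.2.trans_le ((ddle h2k).mpr (by linarith))
        · apply haar_zero_high
          have hc : (j':ℝ)+1 ≤ (j:ℝ) := by exact_mod_cast hlt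
          exact le_trans ((ddle h2k).mpr (by linarith)) hm.1
      rw [hz, mul_zero]
  simp only [key]
  simp

lemma integral_haar_mul (k j k' j' : ℕ) (hk : 1 ≤ k) (hk' : 1 ≤ k')
    (hj1 : 1 ≤ j) (hj2 : j ≤ 2^(k-1)) (hj'1 : 1 ≤ j') (hj'2 : j' ≤ 2^(k'-1)) :
    ∫ t in Ico (0:ℝ) 1, haar k j t * haar k' j' t
      = if k = k' ∧ j = j' then 1 else 0 := by
  rcases lt_trichotomy k k' with h | h | h
  · rw [if_neg (fun hc => by omega)]
    exact integral_haar_mul_lt h hj'1 hj'2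
  · subst h
    by_cases hj : j = j'
    · subst hj
      rw [if_pos ⟨rfl, rfl⟩]
      exact integral_haar_sq hk hj1 hj2
    · rw [if_neg (fun hc => hj hc.2)]
      exact integral_haar_mul_ne hj
  · rw [if_neg (fun hc => by omega)]
    have := integral_haar_mul_lt h hj1 hj2 (k := k') (j := j')
    calc ∫ t in Ico (0:ℝ) 1, haar k j t * haar k' j' t
        = ∫ t in Ico (0:ℝ) 1, haar k' j' t * haar k j t := by
          simp only [mul_comm]
      _ = 0 := this
-- chunk 9: coefficient recovery
lemma integrable_Ico01 {f : ℝ → ℝ} (hm : Measurable f) (C : ℝ) (hC : ∀ t, |f t| ≤ C) :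
    Integrable f (volume.restrict (Ico (0:ℝ) 1)) := by
  refine Integrable.mono' (integrable_const C) hm.aestronglyMeasurable ?_
  exact ae_of_all _ (fun t => by simpa [Real.norm_eq_abs] using hC t)

lemma coeff_scalar (a : ℕ → ℕ → ℝ) (n k j : ℕ) (hk1 : 1 ≤ k) (hk2 : k ≤ n)
    (hj1 : 1 ≤ j) (hj2 : j ≤ 2^(k-1)) :
    ∫ t in Ico (0:ℝ) 1, haar k j t * walshSum a (fun _ _ => (1:ℝ)) 1 n t = a k j := by
  have key : (fun t => haar k j t * walshSum a (fun _ _ => (1:ℝ)) 1 n t) =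
      fun t => ∑ k' ∈ Finset.Icc 1 n, ∑ j' ∈ Finset.Icc 1 (2^(k'-1)),
        (haar k j t * haar k' j' t) * a k' j' := by
    funext t
    simp only [walshSum, smul_eq_mul, one_mul, Finset.mul_sum]
    exact Finset.sum_congr rfl fun _ _ => Finset.sum_congr rfl fun _ _ => by ring
  have hint : ∀ (k' j' : ℕ), Integrable (fun t => (haar k j t * haar k' j' t) * a k' j')
      (volume.restrict (Ico (0:ℝ) 1)) := by
    intro k' j'
    apply integrable_Ico01 (((measurable_haar k j).mul (measurable_haar k' j')).mul measurable_const)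
      ((2:ℝ)^(((k:ℝ)-1)/2) * (2:ℝ)^(((k':ℝ)-1)/2) * |a k' j'|)
    intro t
    show |haar k j t * haar k' j' t * a k' j'| ≤ _
    rw [abs_mul, abs_mul]
    have m1 : |haar k j t| * |haar k' j' t| ≤ (2:ℝ)^(((k:ℝ)-1)/2) * (2:ℝ)^(((k':ℝ)-1)/2) :=
      mul_le_mul (abs_haar_le k j t) (abs_haar_le k' j' t) (abs_nonneg _) (haar_amp_pos k).le
    exact mul_le_mul_of_nonneg_right m1 (abs_nonneg _)
  rw [key]
  rw [MeasureTheory.integral_finset_sum _ (fun k' _ => integrable_finset_sum _ (fun j' _ => hint k' j'))]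
  have inner : ∀ k' ∈ Finset.Icc 1 n,
      (∫ t in Ico (0:ℝ) 1, ∑ j' ∈ Finset.Icc 1 (2^(k'-1)), (haar k j t * haar k' j' t) * a k' j')
      = ∑ j' ∈ Finset.Icc 1 (2^(k'-1)), (if k = k' ∧ j = j' then (1:ℝ) else 0) * a k' j' := by
    intro k' hk'
    rw [MeasureTheory.integral_finset_sum _ (fun j' _ => hint k' j')]
    refine Finset.sum_congr rfl fun j' hj' => ?_
    rw [MeasureTheory.integral_mul_const]
    obtain ⟨h1, h2⟩ := Finset.mem_Icc.mp hj'
    obtain ⟨h3, h4⟩ := Finset.mem_Icc.mp hk'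
    rw [integral_haar_mul k j k' j' hk1 h3 hj1 hj2 h1 h2]
  rw [Finset.sum_congr rfl inner]
  rw [Finset.sum_eq_single_of_mem k (Finset.mem_Icc.mpr ⟨hk1, hk2⟩)]
  · rw [Finset.sum_eq_single_of_mem j (Finset.mem_Icc.mpr ⟨hj1, hj2⟩)]
    · rw [if_pos ⟨rfl, rfl⟩, one_mul]
    · intro j' _ hne
      rw [if_neg (fun hc => hne hc.2.symm), zero_mul]
  · intro k' _ hne
    exact Finset.sum_eq_zero fun j' _ => by rw [if_neg (fun hc => hne hc.1.symm), zero_mul]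
-- chunk 10: nonemptiness of the muCC set
lemma measurable_walshSum_r (a : ℕ → ℕ → ℝ) (ε : ℕ → ℕ → ℝ) (m n : ℕ) :
    Measurable (walshSum a ε m n) := by
  unfold walshSum
  apply Finset.measurable_sum
  intro k _
  apply Finset.measurable_sum
  intro j _
  simp only [smul_eq_mul]
  exact (measurable_const.mul (measurable_haar k j)).mul measurable_const

lemma volume_Ico01 : (volume (Ico (0:ℝ) 1)).toReal = 1 := by
  rw [Real.volume_Ico]
  norm_num

lemma muCC_nonempty {X Y : Type*} [NormedAddCommGroup X] [NormedSpace ℝ X]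
    [NormedAddCommGroup Y] [NormedSpace ℝ Y] (T : X →L[ℝ] Y) (n : ℕ) :
    ∃ c : ℝ, 1 ≤ c ∧ ∀ x : ℕ → ℕ → X,
      l2norm (walshSum (fun k j => T (x k j)) (fun k _ => (-1)^k) 1 n) ≤
        c * l2norm (walshSum x (fun _ _ => 1) 1 n) := by
  have h2n : (0:ℝ) < 2^n := by positivity
  set S2 := Real.sqrt ((2:ℝ)^n) with hS2
  have hS20 : 0 ≤ S2 := Real.sqrt_nonneg _
  set K := ∑ k ∈ Finset.Icc 1 n, ∑ j ∈ Finset.Icc 1 (2^(k-1)),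
      (2:ℝ)^(((k:ℝ)-1)/2) * ((2:ℝ)^(((k:ℝ)-1)/2) * (S2 * ‖T‖)) with hK
  have hK0 : 0 ≤ K := Finset.sum_nonneg fun k _ => Finset.sum_nonneg fun j _ => by positivity
  refine ⟨1 + K, by linarith, ?_⟩
  intro x
  set L := l2norm (walshSum x (fun _ _ => (1:ℝ)) 1 n) with hL
  have hL0 : 0 ≤ L := l2norm_nonneg _
  -- sup bound for the plain sum on [0,1)
  have hgpt : ∀ t ∈ Ico (0:ℝ) 1, ‖walshSum x (fun _ _ => (1:ℝ)) 1 n t‖ ≤ S2 * L := by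
    intro t ht
    obtain ⟨m, hm, h1, h2⟩ := exists_dyadic n ht.1 ht.2
    rw [walshSum_dyadic x _ 1 n n le_rfl m h1 h2]
    have hterm : ((2:ℝ)^n)⁻¹ * ‖walshSum x (fun _ _ => (1:ℝ)) 1 n ((m:ℝ)/2^n)‖^2 ≤ L^2 := by
      rw [hL, l2normsq x _ 1 n n le_rfl]
      exact Finset.single_le_sum
        (f := fun i : ℕ => ((2:ℝ)^n)⁻¹ * ‖walshSum x (fun _ _ => (1:ℝ)) 1 n ((i:ℝ)/2^n)‖^2)
        (s := Finset.range (2^n)) (fun i _ => by positivity) (Finset.mem_range.mpr hm)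
    have h3 : ‖walshSum x (fun _ _ => (1:ℝ)) 1 n ((m:ℝ)/2^n)‖^2 ≤ (2:ℝ)^n * L^2 := by
      rw [inv_mul_le_iff₀ h2n] at hterm
      calc _ ≤ (2:ℝ)^n * (L^2) := hterm
        _ = (2:ℝ)^n * L^2 := by ring
    calc ‖walshSum x (fun _ _ => (1:ℝ)) 1 n ((m:ℝ)/2^n)‖
        = Real.sqrt (‖walshSum x (fun _ _ => (1:ℝ)) 1 n ((m:ℝ)/2^n)‖^2) :=
          (Real.sqrt_sq (norm_nonneg _)).symm
      _ ≤ Real.sqrt ((2:ℝ)^n * L^2) := Real.sqrt_le_sqrt h3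
      _ = S2 * L := by rw [Real.sqrt_mul (by positivity), Real.sqrt_sq hL0]
  -- coefficient bound
  have hcoef : ∀ k j, 1 ≤ k → k ≤ n → 1 ≤ j → j ≤ 2^(k-1) →
      ‖x k j‖ ≤ (2:ℝ)^(((k:ℝ)-1)/2) * (S2 * L) := by
    intro k j hk1 hk2 hj1 hj2
    by_cases hx0 : x k j = 0
    · rw [hx0, norm_zero]; positivity
    obtain ⟨f, hf1, hf2⟩ := exists_dual_vector ℝ (x k j) (norm_ne_zero_iff.mpr hx0)
    set a' : ℕ → ℕ → ℝ := fun k j => f (x k j) with ha'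
    have hfg : ∀ t, walshSum a' (fun _ _ => (1:ℝ)) 1 n t = f (walshSum x (fun _ _ => (1:ℝ)) 1 n t) := by
      intro t
      simp [walshSum, map_sum, _root_.map_smul, smul_eq_mul, ha']
    have hval : a' k j = ∫ t in Ico (0:ℝ) 1, haar k j t * walshSum a' (fun _ _ => (1:ℝ)) 1 n t :=
      (coeff_scalar a' n k j hk1 hk2 hj1 hj2).symm
    have hCb : ∀ t ∈ Ico (0:ℝ) 1,
        ‖haar k j t * walshSum a' (fun _ _ => (1:ℝ)) 1 n t‖ ≤ (2:ℝ)^(((k:ℝ)-1)/2) * (S2 * L) := by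
      intro t ht
      rw [Real.norm_eq_abs, abs_mul]
      have hb1 : |walshSum a' (fun _ _ => (1:ℝ)) 1 n t| ≤ S2 * L := by
        rw [hfg]
        calc |f (walshSum x (fun _ _ => (1:ℝ)) 1 n t)|
            ≤ ‖f‖ * ‖walshSum x (fun _ _ => (1:ℝ)) 1 n t‖ := f.le_opNorm _
          _ = ‖walshSum x (fun _ _ => (1:ℝ)) 1 n t‖ := by rw [hf1, one_mul]
          _ ≤ S2 * L := hgpt t ht
      exact mul_le_mul (abs_haar_le k j t) hb1 (abs_nonneg _) (haar_amp_pos k).le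
    have hnorm : ‖∫ t in Ico (0:ℝ) 1, haar k j t * walshSum a' (fun _ _ => (1:ℝ)) 1 n t‖ ≤
        (2:ℝ)^(((k:ℝ)-1)/2) * (S2 * L) * (volume (Ico (0:ℝ) 1)).toReal := by
      apply norm_setIntegral_le_of_norm_le_const (by rw [Real.volume_Ico]; exact ENNReal.ofReal_lt_top) hCb
    rw [volume_Ico01, mul_one] at hnorm
    calc ‖x k j‖ = a' k j := hf2.symm
      _ ≤ |a' k j| := le_abs_self _
      _ = ‖∫ t in Ico (0:ℝ) 1, haar k j t * walshSum a' (fun _ _ => (1:ℝ)) 1 n t‖ := by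
          rw [← hval, Real.norm_eq_abs]
      _ ≤ _ := hnorm
  -- pointwise bound for the signed image sum
  have hpt : ∀ t : ℝ, ‖walshSum (fun k j => T (x k j)) (fun k _ => (-1:ℝ)^k) 1 n t‖ ≤ K * L := by
    intro t
    refine le_trans (norm_sum_le _ _) ?_
    rw [hK, Finset.sum_mul]
    refine Finset.sum_le_sum fun k hk => ?_
    refine le_trans (norm_sum_le _ _) ?_
    rw [Finset.sum_mul]
    refine Finset.sum_le_sum fun j hj => ?_
    obtain ⟨hk1, hk2⟩ := Finset.mem_Icc.mp hk
    obtain ⟨hj1, hj2⟩ := Finset.mem_Icc.mp hj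
    rw [norm_smul, Real.norm_eq_abs, abs_mul, abs_pow, abs_neg, abs_one, one_pow, one_mul]
    calc |haar k j t| * ‖T (x k j)‖
        ≤ (2:ℝ)^(((k:ℝ)-1)/2) * (‖T‖ * ‖x k j‖) := by
          apply mul_le_mul (abs_haar_le k j t) (T.le_opNorm _) (norm_nonneg _)
          positivity
      _ ≤ (2:ℝ)^(((k:ℝ)-1)/2) * (‖T‖ * ((2:ℝ)^(((k:ℝ)-1)/2) * (S2 * L))) := by
          apply mul_le_mul_of_nonneg_left _ (haar_amp_pos k).le
          exact mul_le_mul_of_nonneg_left (hcoef k j hk1 hk2 hj1 hj2) (norm_nonneg _)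
      _ = (2:ℝ)^(((k:ℝ)-1)/2) * ((2:ℝ)^(((k:ℝ)-1)/2) * (S2 * ‖T‖)) * L := by ring
  -- conclude
  have hsq : l2norm (walshSum (fun k j => T (x k j)) (fun k _ => (-1:ℝ)^k) 1 n) ^ 2 ≤ (K*L)^2 := by
    rw [l2normsq _ _ 1 n n le_rfl]
    calc ∑ m ∈ Finset.range (2^n), ((2:ℝ)^n)⁻¹ *
          ‖walshSum (fun k j => T (x k j)) (fun k _ => (-1:ℝ)^k) 1 n ((m:ℝ)/2^n)‖^2
        ≤ ∑ m ∈ Finset.range (2^n), ((2:ℝ)^n)⁻¹ * (K*L)^2 := by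
          refine Finset.sum_le_sum fun m _ => ?_
          exact mul_le_mul_of_nonneg_left
            (pow_le_pow_left₀ (norm_nonneg _) (hpt _) 2) (by positivity)
      _ = (K*L)^2 := by
          rw [Finset.sum_const, Finset.card_range, nsmul_eq_mul]
          push_cast
          field_simp
  have hfin : l2norm (walshSum (fun k j => T (x k j)) (fun k _ => (-1:ℝ)^k) 1 n) ≤ K * L := by
    have h1 := Real.sqrt_le_sqrt hsq
    rwa [Real.sqrt_sq (l2norm_nonneg _), Real.sqrt_sq (by positivity)] at h1
  calc l2norm (walshSum (fun k j => T (x k j)) (fun k _ => (-1:ℝ)^k) 1 n) ≤ K * L := hfin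
    _ ≤ (1+K) * L := by nlinarith
-- chunk 11: the main theorem
/-- Upper-part estimate via self-similarity of the Haar system. -/
theorem upper_part_estimate {X Y : Type*} [NormedAddCommGroup X] [NormedSpace ℝ X]
    [NormedAddCommGroup Y] [NormedSpace ℝ Y] (T : X →L[ℝ] Y) (n : ℕ) (hn : 1 ≤ n)
    (x : ℕ → ℕ → X) :
    l2norm (walshSum (fun k j => T (x k j)) (fun k _ => (-1)^k) (n+1) (2*n)) ≤
      muCC T n * l2norm (walshSum x (fun _ _ => 1) (n+1) (2*n)) := by
  classical
  obtain ⟨c₀, hc₀⟩ := muCC_nonempty T n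
  set R := l2norm (walshSum x (fun _ _ => (1:ℝ)) (n+1) (2*n)) with hR
  have hR0 : 0 ≤ R := l2norm_nonneg _
  have key : ∀ c : ℝ, (1 ≤ c ∧ ∀ z : ℕ → ℕ → X,
      l2norm (walshSum (fun k j => T (z k j)) (fun k _ => (-1:ℝ)^k) 1 n) ≤
        c * l2norm (walshSum z (fun _ _ => (1:ℝ)) 1 n)) →
      l2norm (walshSum (fun k j => T (x k j)) (fun k _ => (-1:ℝ)^k) (n+1) (2*n)) ≤ c * R := by
    rintro c ⟨hc1, hc2⟩
    have hc0 : (0:ℝ) ≤ c := by linarith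
    have hdT := upper_decomp (fun k j => T (x k j)) (fun k _ => (-1:ℝ)^k) n hn
    have hdx := upper_decomp x (fun _ _ => (1:ℝ)) n hn
    have hq : ∀ q ∈ Finset.range (2^n),
        l2norm (walshSum (fun k j => T (x (k+n) (j + q*2^(k-1))))
          (fun k j => (-1:ℝ)^(k+n)) 1 n) ^ 2 ≤
        c^2 * l2norm (walshSum (fun k j => x (k+n) (j + q*2^(k-1)))
          (fun _ _ => (1:ℝ)) 1 n) ^ 2 := by
      intro q _
      set z : ℕ → ℕ → X := fun k j => ((-1:ℝ)^n) • x (k+n) (j + q*2^(k-1)) with hz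
      have h1 := hc2 z
      have e1 : ∀ t : ℝ, walshSum (fun k j => T (z k j)) (fun k _ => (-1:ℝ)^k) 1 n t
          = walshSum (fun k j => T (x (k+n) (j + q*2^(k-1)))) (fun k j => (-1:ℝ)^(k+n)) 1 n t := by
        intro t
        unfold walshSum
        refine Finset.sum_congr rfl fun k _ => Finset.sum_congr rfl fun j _ => ?_
        show ((-1:ℝ)^k * haar k j t) • T (((-1:ℝ)^n) • x (k+n) (j + q*2^(k-1))) = _
        rw [T.map_smul, smul_smul]
        show _ = ((-1:ℝ)^(k+n) * haar k j t) • T (x (k+n) (j + q*2^(k-1)))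
        congr 1
        rw [pow_add]
        ring
      have e2 : ∀ t : ℝ, ‖walshSum z (fun _ _ => (1:ℝ)) 1 n t‖
          = ‖walshSum (fun k j => x (k+n) (j + q*2^(k-1))) (fun _ _ => (1:ℝ)) 1 n t‖ := by
        intro t
        have hsmul : walshSum z (fun _ _ => (1:ℝ)) 1 n t = ((-1:ℝ)^n) •
            walshSum (fun k j => x (k+n) (j + q*2^(k-1))) (fun _ _ => (1:ℝ)) 1 n t := by
          unfold walshSum
          rw [Finset.smul_sum]
          refine Finset.sum_congr rfl fun k _ => ?_
          rw [Finset.smul_sum]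
          refine Finset.sum_congr rfl fun j _ => ?_
          show ((1:ℝ) * haar k j t) • (((-1:ℝ)^n) • x (k+n) (j + q*2^(k-1))) = _
          rw [smul_comm]
        rw [hsmul, norm_smul]
        simp
      have E1 : l2norm (walshSum (fun k j => T (z k j)) (fun k _ => (-1:ℝ)^k) 1 n)
          = l2norm (walshSum (fun k j => T (x (k+n) (j + q*2^(k-1))))
              (fun k j => (-1:ℝ)^(k+n)) 1 n) := by
        rw [show walshSum (fun k j => T (z k j)) (fun k _ => (-1:ℝ)^k) 1 n
            = walshSum (fun k j => T (x (k+n) (j + q*2^(k-1))))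
              (fun k j => (-1:ℝ)^(k+n)) 1 n from funext e1]
      have E2 : l2norm (walshSum z (fun _ _ => (1:ℝ)) 1 n)
          = l2norm (walshSum (fun k j => x (k+n) (j + q*2^(k-1))) (fun _ _ => (1:ℝ)) 1 n) := by
        unfold l2norm
        rw [show (fun t => ‖walshSum z (fun _ _ => (1:ℝ)) 1 n t‖^2)
            = (fun t => ‖walshSum (fun k j => x (k+n) (j + q*2^(k-1)))
                (fun _ _ => (1:ℝ)) 1 n t‖^2) from funext fun t => by rw [e2]]
      rw [E1, E2] at h1
      calc l2norm (walshSum (fun k j => T (x (k+n) (j + q*2^(k-1))))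
            (fun k j => (-1:ℝ)^(k+n)) 1 n) ^ 2
          ≤ (c * l2norm (walshSum (fun k j => x (k+n) (j + q*2^(k-1)))
              (fun _ _ => (1:ℝ)) 1 n)) ^ 2 := pow_le_pow_left₀ (l2norm_nonneg _) h1 2
        _ = c^2 * l2norm (walshSum (fun k j => x (k+n) (j + q*2^(k-1)))
              (fun _ _ => (1:ℝ)) 1 n) ^ 2 := by ring
    have hsq : l2norm (walshSum (fun k j => T (x k j)) (fun k _ => (-1:ℝ)^k) (n+1) (2*n)) ^ 2
        ≤ (c*R)^2 := by
      have hcr : (c*R)^2 = c^2 * l2norm (walshSum x (fun _ _ => (1:ℝ)) (n+1) (2*n))^2 := by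
        rw [hR]; ring
      rw [hcr, hdT, hdx, Finset.mul_sum]
      refine Finset.sum_le_sum fun q hqm => ?_
      exact hq q hqm
    have h2 := Real.sqrt_le_sqrt hsq
    rwa [Real.sqrt_sq (l2norm_nonneg _), Real.sqrt_sq (mul_nonneg hc0 hR0)] at h2
  rw [show muCC T n = sInf {c : ℝ | 1 ≤ c ∧ ∀ z : ℕ → ℕ → X,
      l2norm (walshSum (fun k j => T (z k j)) (fun k _ => (-1:ℝ)^k) 1 n) ≤
        c * l2norm (walshSum z (fun _ _ => (1:ℝ)) 1 n)} from rfl]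
  rcases eq_or_lt_of_le hR0 with h0 | h0
  · have h1 := key c₀ hc₀
    rw [← h0] at h1 ⊢
    simpa using h1
  · have hlow : l2norm (walshSum (fun k j => T (x k j)) (fun k _ => (-1:ℝ)^k) (n+1) (2*n)) / R ≤
        sInf {c : ℝ | 1 ≤ c ∧ ∀ z : ℕ → ℕ → X,
          l2norm (walshSum (fun k j => T (z k j)) (fun k _ => (-1:ℝ)^k) 1 n) ≤
            c * l2norm (walshSum z (fun _ _ => (1:ℝ)) 1 n)} :=
      le_csInf ⟨c₀, hc₀⟩ (fun c hc => (div_le_iff₀ h0).mpr (key c hc))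
    calc l2norm (walshSum (fun k j => T (x k j)) (fun k _ => (-1:ℝ)^k) (n+1) (2*n))
        = l2norm (walshSum (fun k j => T (x k j)) (fun k _ => (-1:ℝ)^k) (n+1) (2*n)) / R * R := by
          rw [div_mul_cancel₀ _ (ne_of_gt h0)]
      _ ≤ _ * R := mul_le_mul_of_nonneg_right hlow hR0
end

section
/- Spectrum-shifting: Let f ∈ L_2^X have spectrum contained in D_1^n (i.e., ⟨f, χ_k^{(j)}⟩ = 0 for k > n). Let ψ_n be the composition of the transformations φ_n^{(j)} for j = 1,...,2^{n-1}. Then ⟨f ∘ ψ_n, χ_n^{(j)}⟩ = 0 for all 1 ≤ j ≤ 2^{n-1}; that is, the n-th level of the spectrum of f is shifted entirely to level n+1. -/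
open MeasureTheory Set

/-!
On the support of `χ_n^{(j)}`, cut into four dyadic quarters `Q₁, Q₂, Q₃, Q₄` of length
`2^{-(n+1)}`, the map `ψ_n` acts as `φ_n^{(j)}` alone (the other `φ_n^{(i)}` live on disjoint
blocks), which translates `Q₂` onto `Q₃` and back and fixes `Q₁` and `Q₄`. Hence
`⟨f ∘ ψ_n, χ_n^{(j)}⟩` is a multiple of `(∫_{Q₁} f + ∫_{Q₃} f) - (∫_{Q₂} f + ∫_{Q₄} f)
= (∫_{Q₁} f - ∫_{Q₂} f) + (∫_{Q₃} f - ∫_{Q₄} f)`, and the two brackets are multiples of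
`⟨f, χ_{n+1}^{(2j-1)}⟩` and `⟨f, χ_{n+1}^{(2j)}⟩`, which vanish by hypothesis.
-/

section Translation

variable {X : Type*} [NormedAddCommGroup X] {g : ℝ → X} {Ψ : ℝ → ℝ} {a b c d d₁ d₂ : ℝ}

theorem MeasureTheory.IntegrableOn.comp_of_eqOn_add (hg : IntegrableOn g (Ico (a + d) (b + d)))
    (hΨ : EqOn Ψ (· + d) (Ico a b)) : IntegrableOn (g ∘ Ψ) (Ico a b) := by
  rw [← image_add_const_Ico, (measurePreserving_add_right volume d).integrableOn_image
    (measurableEmbedding_addRight d)] at hg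
  exact hg.congr_fun (fun t ht => congrArg g (hΨ ht).symm) measurableSet_Ico

theorem MeasureTheory.IntegrableOn.comp_of_eqOn_add₂ (hab : a ≤ b) (hbc : b ≤ c)
    (hg₁ : IntegrableOn g (Ico (a + d₁) (b + d₁))) (hg₂ : IntegrableOn g (Ico (b + d₂) (c + d₂)))
    (hΨ₁ : EqOn Ψ (· + d₁) (Ico a b)) (hΨ₂ : EqOn Ψ (· + d₂) (Ico b c)) :
    IntegrableOn (g ∘ Ψ) (Ico a c) := by
  rw [← Ico_union_Ico_eq_Ico hab hbc]
  exact (hg₁.comp_of_eqOn_add hΨ₁).union (hg₂.comp_of_eqOn_add hΨ₂)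

variable [NormedSpace ℝ X]

theorem setIntegral_Ico_comp_of_eqOn_add (hΨ : EqOn Ψ (· + d) (Ico a b)) :
    ∫ t in Ico a b, (g ∘ Ψ) t = ∫ t in Ico (a + d) (b + d), g t := by
  calc ∫ t in Ico a b, (g ∘ Ψ) t = ∫ t in Ico a b, g (t + d) :=
        setIntegral_congr_fun measurableSet_Ico fun t ht => congrArg g (hΨ ht)
    _ = ∫ t in Ico (a + d) (b + d), g t := by
      rw [← image_add_const_Ico, (measurePreserving_add_right volume d).setIntegral_image_emb
        (measurableEmbedding_addRight d)]

theorem setIntegral_Ico_comp_of_eqOn_add₂ (hab : a ≤ b) (hbc : b ≤ c)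
    (hg₁ : IntegrableOn g (Ico (a + d₁) (b + d₁))) (hg₂ : IntegrableOn g (Ico (b + d₂) (c + d₂)))
    (hΨ₁ : EqOn Ψ (· + d₁) (Ico a b)) (hΨ₂ : EqOn Ψ (· + d₂) (Ico b c)) :
    ∫ t in Ico a c, (g ∘ Ψ) t =
      (∫ t in Ico (a + d₁) (b + d₁), g t) + ∫ t in Ico (b + d₂) (c + d₂), g t := by
  rw [← Ico_union_Ico_eq_Ico hab hbc, setIntegral_union Ico_disjoint_Ico_same measurableSet_Ico
    (hg₁.comp_of_eqOn_add hΨ₁) (hg₂.comp_of_eqOn_add hΨ₂), setIntegral_Ico_comp_of_eqOn_add hΨ₁,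
    setIntegral_Ico_comp_of_eqOn_add hΨ₂]

theorem integrableOn_and_setIntegral_comp_swap {e δ : ℝ} (hab : a ≤ b) (hbc : b + δ = c)
    (hcd : c + δ = d) (hde : d ≤ e) (hδ : 0 ≤ δ) (hg : IntegrableOn g (Ico a e))
    (hΨ₁ : EqOn Ψ id (Ico a b)) (hΨ₂ : EqOn Ψ (· + δ) (Ico b c))
    (hΨ₃ : EqOn Ψ (· - δ) (Ico c d)) (hΨ₄ : EqOn Ψ id (Ico d e)) :
    IntegrableOn (g ∘ Ψ) (Ico a e) ∧
      ∫ t in Ico a c, (g ∘ Ψ) t = (∫ t in Ico a b, g t) + ∫ t in Ico c d, g t ∧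
      ∫ t in Ico c e, (g ∘ Ψ) t = (∫ t in Ico b c, g t) + ∫ t in Ico d e, g t := by
  have hΨ₁' : EqOn Ψ (· + 0) (Ico a b) := fun t ht => (hΨ₁ ht).trans (add_zero t).symm
  have hΨ₃' : EqOn Ψ (· + -δ) (Ico c d) := fun t ht => (hΨ₃ ht).trans (sub_eq_add_neg t δ)
  have hΨ₄' : EqOn Ψ (· + 0) (Ico d e) := fun t ht => (hΨ₄ ht).trans (add_zero t).symm
  have hg' : ∀ {x y}, a ≤ x → y ≤ e → IntegrableOn g (Ico x y) := fun hx hy =>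
    hg.mono_set (Ico_subset_Ico hx hy)
  have i₁ := hg' (x := a + 0) (y := b + 0) (by linarith) (by linarith)
  have i₂ := hg' (x := b + δ) (y := c + δ) (by linarith) (by linarith)
  have i₃ := hg' (x := c + -δ) (y := d + -δ) (by linarith) (by linarith)
  have i₄ := hg' (x := d + 0) (y := e + 0) (by linarith) (by linarith)
  refine ⟨?_, ?_, ?_⟩
  · rw [← Ico_union_Ico_eq_Ico (b := c) (by linarith) (by linarith)]
    exact (i₁.comp_of_eqOn_add₂ hab (by linarith) i₂ hΨ₁' hΨ₂).union
      (i₃.comp_of_eqOn_add₂ (by linarith) hde i₄ hΨ₃' hΨ₄')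
  · rw [setIntegral_Ico_comp_of_eqOn_add₂ hab (by linarith) i₁ i₂ hΨ₁' hΨ₂, hbc, hcd,
      add_zero, add_zero]
  · rw [setIntegral_Ico_comp_of_eqOn_add₂ (by linarith) hde i₃ i₄ hΨ₃' hΨ₄',
      show c + -δ = b by linarith, show d + -δ = c by linarith, add_zero, add_zero]

end Translation

section Haar

variable {k j : ℕ} {t : ℝ}

theorem haar_of_mem_left (ht : t ∈ Ico (((2*j:ℝ)-2)/2^k) (((2*j:ℝ)-1)/2^k)) :
    haar k j t = (2:ℝ) ^ (((k:ℝ)-1)/2) :=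
  if_pos ht

theorem haar_of_mem_right (ht : t ∈ Ico (((2*j:ℝ)-1)/2^k) ((2*j:ℝ)/2^k)) :
    haar k j t = -(2:ℝ) ^ (((k:ℝ)-1)/2) := by
  rw [haar, if_neg fun h => ht.1.not_gt h.2]
  exact if_pos ht

theorem haar_of_notMem (ht : t ∉ Ico (((2*j:ℝ)-2)/2^k) ((2*j:ℝ)/2^k)) : haar k j t = 0 := by
  have hmid : ((2*j:ℝ)-1)/2^k ≤ (2*j:ℝ)/2^k := by gcongr; linarith
  have hmid' : ((2*j:ℝ)-2)/2^k ≤ ((2*j:ℝ)-1)/2^k := by gcongr; linarith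
  rw [haar, if_neg fun h => ht ⟨h.1, h.2.trans_le hmid⟩,
    if_neg fun h => ht ⟨hmid'.trans h.1, h.2⟩]

theorem Ico_haar_subset (hk : 1 ≤ k) (hj₁ : 1 ≤ j) (hj₂ : j ≤ 2^(k-1)) :
    Ico (((2*j:ℝ)-2)/2^k) ((2*j:ℝ)/2^k) ⊆ Ico 0 1 := by
  have hpow : (2:ℝ)^k = 2 * 2^(k-1) := by rw [← pow_succ', Nat.sub_add_cancel hk]
  have hj₁' : (1:ℝ) ≤ j := by exact_mod_cast hj₁
  have hj₂' : (j:ℝ) ≤ 2^(k-1) := by exact_mod_cast hj₂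
  refine Ico_subset_Ico (div_nonneg (by linarith) (by positivity)) ?_
  rw [div_le_one (by positivity), hpow]
  linarith

variable {X : Type*} [NormedAddCommGroup X] [NormedSpace ℝ X] {g g₁ g₂ : ℝ → X}

theorem haarCoeff_congr (h : EqOn g₁ g₂ (Ico (((2*j:ℝ)-2)/2^k) ((2*j:ℝ)/2^k))) :
    haarCoeff g₁ k j = haarCoeff g₂ k j := by
  refine setIntegral_congr_fun measurableSet_Ico fun t _ => ?_
  by_cases ht : t ∈ Ico (((2*j:ℝ)-2)/2^k) ((2*j:ℝ)/2^k)
  · rw [h ht]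
  · simp only [haar_of_notMem ht, zero_smul]

theorem haarCoeff_eq_smul_sub {x y z : ℝ} (hk : 1 ≤ k) (hj₁ : 1 ≤ j) (hj₂ : j ≤ 2^(k-1))
    (hx : ((2*j:ℝ)-2)/2^k = x) (hy : ((2*j:ℝ)-1)/2^k = y) (hz : (2*j:ℝ)/2^k = z)
    (hg : IntegrableOn g (Ico x z)) :
    haarCoeff g k j =
      (2:ℝ) ^ (((k:ℝ)-1)/2) • ((∫ t in Ico x y, g t) - ∫ t in Ico y z, g t) := by
  subst hx hy hz
  set c : ℝ := (2:ℝ) ^ (((k:ℝ)-1)/2)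
  have hxy : ((2*j:ℝ)-2)/2^k ≤ ((2*j:ℝ)-1)/2^k := by gcongr; linarith
  have hyz : ((2*j:ℝ)-1)/2^k ≤ (2*j:ℝ)/2^k := by gcongr; linarith
  have hleft : EqOn (fun t => haar k j t • g t) (fun t => c • g t)
      (Ico (((2*j:ℝ)-2)/2^k) (((2*j:ℝ)-1)/2^k)) := fun t ht => by
    simp only [haar_of_mem_left ht, c]
  have hright : EqOn (fun t => haar k j t • g t) (fun t => (-c) • g t)
      (Ico (((2*j:ℝ)-1)/2^k) ((2*j:ℝ)/2^k)) := fun t ht => by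
    simp only [haar_of_mem_right ht, c]
  rw [haarCoeff, setIntegral_eq_of_subset_of_forall_sdiff_eq_zero measurableSet_Ico
      (Ico_haar_subset hk hj₁ hj₂) fun t ht => by rw [haar_of_notMem ht.2, zero_smul],
    ← Ico_union_Ico_eq_Ico hxy hyz,
    setIntegral_union Ico_disjoint_Ico_same measurableSet_Ico
      (IntegrableOn.congr_fun ((hg.mono_set (Ico_subset_Ico_right hyz)).smul c) hleft.symm
        measurableSet_Ico)
      (IntegrableOn.congr_fun ((hg.mono_set (Ico_subset_Ico_left hxy)).smul (-c)) hright.symm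
        measurableSet_Ico),
    setIntegral_congr_fun measurableSet_Ico hleft, setIntegral_congr_fun measurableSet_Ico hright,
    integral_smul, integral_smul, neg_smul, smul_sub, ← sub_eq_add_neg]

theorem haarCoeff_eq_zero_iff {x y z : ℝ} (hk : 1 ≤ k) (hj₁ : 1 ≤ j) (hj₂ : j ≤ 2^(k-1))
    (hx : ((2*j:ℝ)-2)/2^k = x) (hy : ((2*j:ℝ)-1)/2^k = y) (hz : (2*j:ℝ)/2^k = z)
    (hg : IntegrableOn g (Ico x z)) :
    haarCoeff g k j = 0 ↔ ∫ t in Ico x y, g t = ∫ t in Ico y z, g t := by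
  rw [haarCoeff_eq_smul_sub hk hj₁ hj₂ hx hy hz hg, smul_eq_zero_iff_right (by positivity),
    sub_eq_zero]

end Haar

theorem two_mul_le_two_pow {n j : ℕ} (hn : 1 ≤ n) (hj : j ≤ 2^(n-1)) : 2*j ≤ 2^n := by
  rw [← Nat.sub_add_cancel hn, pow_succ']; omega

section Phi

variable {h i j : ℕ} {t : ℝ}

theorem phi_of_mem_left (ht : t ∈ Ico (((4*i:ℝ)-3)/2^(h+1)) (((4*i:ℝ)-2)/2^(h+1))) :
    phi h i t = t + 1/2^(h+1) :=
  if_pos ht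

theorem phi_of_mem_right (ht : t ∈ Ico (((4*i:ℝ)-2)/2^(h+1)) (((4*i:ℝ)-1)/2^(h+1))) :
    phi h i t = t - 1/2^(h+1) := by
  rw [phi, if_neg fun h => ht.1.not_gt h.2]
  exact if_pos ht

theorem phi_of_notMem (ht : t ∉ Ico (((4*i:ℝ)-3)/2^(h+1)) (((4*i:ℝ)-1)/2^(h+1))) :
    phi h i t = t := by
  have h₁ : ((4*i:ℝ)-3)/2^(h+1) ≤ ((4*i:ℝ)-2)/2^(h+1) := by gcongr; norm_num
  have h₂ : ((4*i:ℝ)-2)/2^(h+1) ≤ ((4*i:ℝ)-1)/2^(h+1) := by gcongr; norm_num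
  rw [phi, if_neg fun h => ht ⟨h.1, h.2.trans_le h₂⟩, if_neg fun h => ht ⟨h₁.trans h.1, h.2⟩]

theorem phi_mapsTo :
    MapsTo (phi h i) (Ico (((2*i:ℝ)-2)/2^h) ((2*i:ℝ)/2^h))
      (Ico (((2*i:ℝ)-2)/2^h) ((2*i:ℝ)/2^h)) := by
  intro t ht
  set δ : ℝ := 1/2^(h+1)
  have hδ : 0 < δ := by positivity
  have e₀ : ((2*i:ℝ)-2)/2^h + δ = ((4*i:ℝ)-3)/2^(h+1) := by ring
  have e₁ : ((4*i:ℝ)-3)/2^(h+1) + δ = ((4*i:ℝ)-2)/2^(h+1) := by ring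
  have e₂ : ((4*i:ℝ)-2)/2^(h+1) + δ = ((4*i:ℝ)-1)/2^(h+1) := by ring
  have e₃ : ((4*i:ℝ)-1)/2^(h+1) + δ = (2*i:ℝ)/2^h := by ring
  obtain ⟨ht₁, ht₂⟩ := ht
  unfold phi
  split_ifs with hl hr
  · exact ⟨by linarith [hl.1], by linarith [hl.2]⟩
  · exact ⟨by linarith [hr.1], by linarith [hr.2]⟩
  · exact ⟨ht₁, ht₂⟩

theorem phi_eqOn_of_ne (hij : i ≠ j) :
    EqOn (phi h i) id (Ico (((2*j:ℝ)-2)/2^h) ((2*j:ℝ)/2^h)) := by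
  intro t ⟨ht₁, ht₂⟩
  refine phi_of_notMem fun ⟨hi₁, hi₂⟩ => ?_
  rcases hij.lt_or_gt with hlt | hgt
  · have hij' : (i:ℝ) + 1 ≤ j := by exact_mod_cast hlt
    have : ((4*i:ℝ)-1)/2^(h+1) ≤ ((2*j:ℝ)-2)/2^h := by
      rw [show ((2*j:ℝ)-2)/2^h = ((4*j:ℝ)-4)/2^(h+1) by ring]
      exact div_le_div_of_nonneg_right (by linarith) (by positivity)
    linarith
  · have hji : (j:ℝ) + 1 ≤ i := by exact_mod_cast hgt
    have : (2*j:ℝ)/2^h ≤ ((4*i:ℝ)-3)/2^(h+1) := by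
      rw [show (2*j:ℝ)/2^h = (4*j:ℝ)/2^(h+1) by ring]
      exact div_le_div_of_nonneg_right (by linarith) (by positivity)
    linarith

theorem foldr_phi_apply (hj : 1 ≤ j) (ht : t ∈ Ico (((2*j:ℝ)-2)/2^h) ((2*j:ℝ)/2^h))
    {l : List ℕ} (hl : l.Nodup) :
    l.foldr (fun i g => phi h (i+1) ∘ g) id t = if j - 1 ∈ l then phi h j t else t := by
  induction l with
  | nil => simp
  | cons a l ih =>
    rw [List.nodup_cons] at hl
    simp only [List.foldr_cons, Function.comp_apply, ih hl.2]
    by_cases ha : a + 1 = j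
    · subst ha
      simp [hl.1]
    · have hne : j - 1 ≠ a := by omega
      simp only [List.mem_cons, hne, false_or]
      exact phi_eqOn_of_ne ha (by split_ifs; exacts [phi_mapsTo ht, ht])

end Phi

theorem haarCoeff_comp_phi_eq_zero {X : Type*} [NormedAddCommGroup X] [NormedSpace ℝ X]
    {g : ℝ → X} {n j : ℕ} (hn : 1 ≤ n) (hj₁ : 1 ≤ j) (hj₂ : j ≤ 2^(n-1))
    (hg : IntegrableOn g (Ico 0 1)) (h₁ : haarCoeff g (n+1) (2*j-1) = 0)
    (h₂ : haarCoeff g (n+1) (2*j) = 0) :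
    haarCoeff (g ∘ phi n j) n j = 0 := by
  set δ : ℝ := 1/2^(n+1)
  set p₀ : ℝ := ((4*j:ℝ)-4)/2^(n+1)
  set p₁ : ℝ := ((4*j:ℝ)-3)/2^(n+1)
  set p₂ : ℝ := ((4*j:ℝ)-2)/2^(n+1)
  set p₃ : ℝ := ((4*j:ℝ)-1)/2^(n+1)
  set p₄ : ℝ := (4*j:ℝ)/2^(n+1)
  have hx : ((2*j:ℝ)-2)/2^n = p₀ := by ring
  have hy : ((2*j:ℝ)-1)/2^n = p₂ := by ring
  have hz : (2*j:ℝ)/2^n = p₄ := by ring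
  have hgQ : ∀ {a b}, p₀ ≤ a → b ≤ p₄ → IntegrableOn g (Ico a b) := fun ha hb =>
    hg.mono_set ((Ico_subset_Ico ha hb).trans (hx ▸ hz ▸ Ico_haar_subset hn hj₁ hj₂))
  have hδ : 0 < δ := by positivity
  have h₀₁ : p₀ + δ = p₁ := by ring
  have h₁₂ : p₁ + δ = p₂ := by ring
  have h₂₃ : p₂ + δ = p₃ := by ring
  have h₃₄ : p₃ + δ = p₄ := by ring
  obtain ⟨hint, hleft, hright⟩ := integrableOn_and_setIntegral_comp_swap (Ψ := phi n j)
    (by linarith) h₁₂ h₂₃ (by linarith) hδ.le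
    (hgQ le_rfl le_rfl) (fun t ht => phi_of_notMem fun h => ht.2.not_ge h.1)
    (fun t ht => phi_of_mem_left ht) (fun t ht => phi_of_mem_right ht)
    (fun t ht => phi_of_notMem fun h => h.2.not_ge ht.1)
  have hcast : (((2*j-1 : ℕ) : ℝ)) = 2*j - 1 := by
    rw [Nat.cast_sub (by omega)]; push_cast; ring
  have hb : 2*j ≤ 2^(n+1-1) := by simpa using two_mul_le_two_pow hn hj₂
  have hQ₁₂ : ∫ t in Ico p₀ p₁, g t = ∫ t in Ico p₁ p₂, g t :=
    (haarCoeff_eq_zero_iff (by omega) (by omega) (by omega) (by rw [hcast]; ring)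
      (by rw [hcast]; ring) (by rw [hcast]; ring) (hgQ le_rfl (by linarith))).1 h₁
  have hQ₃₄ : ∫ t in Ico p₂ p₃, g t = ∫ t in Ico p₃ p₄, g t :=
    (haarCoeff_eq_zero_iff (by omega) (by omega) hb (by push_cast; ring) (by push_cast; ring)
      (by push_cast; ring) (hgQ (by linarith) le_rfl)).1 h₂
  rw [haarCoeff_eq_zero_iff hn hj₁ hj₂ hx hy hz hint, hleft, hright, hQ₁₂, hQ₃₄]

theorem spectrum_shift_general {X : Type*} [NormedAddCommGroup X] [NormedSpace ℝ X]
    (f : ℝ → X)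
    (hf : MemLp f 2 (volume.restrict (Ico (0:ℝ) 1)))
    (n : ℕ) (hn : 1 ≤ n)
    (hspec : ∀ k j : ℕ, n < k → 1 ≤ j → j ≤ 2^(k-1) → haarCoeff f k j = 0) :
    ∀ j : ℕ, 1 ≤ j → j ≤ 2^(n-1) →
      haarCoeff (f ∘ ((List.range (2^(n-1))).foldr (fun j g => phi n (j+1) ∘ g) id))
        n j = 0 := by
  intro j hj₁ hj₂
  have hψ : EqOn ((List.range (2^(n-1))).foldr (fun j g => phi n (j+1) ∘ g) id) (phi n j)
      (Ico (((2*j:ℝ)-2)/2^n) ((2*j:ℝ)/2^n)) := fun t ht => by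
    rw [foldr_phi_apply hj₁ ht List.nodup_range, if_pos (List.mem_range.2 (by omega))]
  have hb : 2*j ≤ 2^(n+1-1) := by simpa using two_mul_le_two_pow hn hj₂
  rw [haarCoeff_congr (hψ.comp_left (g := f))]
  exact haarCoeff_comp_phi_eq_zero hn hj₁ hj₂ (hf.integrable one_le_two)
    (hspec _ _ (by omega) (by omega) (by omega)) (hspec _ _ (by omega) (by omega) hb)

/-- Spectrum shifting: composing with `ψ_n`, the composition of the `φ_n^{(j)}`
for `j = 1, …, 2^{n-1}`, kills the `n`-th level of the spectrum of `f`. -/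
theorem spectrum_shift {X : Type*} [NormedAddCommGroup X] [NormedSpace ℝ X]
    [CompleteSpace X] (f : ℝ → X)
    (hf : MemLp f 2 (volume.restrict (Ico (0:ℝ) 1)))
    (n : ℕ) (hn : 1 ≤ n)
    (hspec : ∀ k j : ℕ, n < k → 1 ≤ j → j ≤ 2^(k-1) → haarCoeff f k j = 0) :
    ∀ j : ℕ, 1 ≤ j → j ≤ 2^(n-1) →
      haarCoeff (f ∘ ((List.range (2^(n-1))).foldr (fun j g => phi n (j+1) ∘ g) id))
        n j = 0 :=
  spectrum_shift_general f hf n hn hspec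
end
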